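/- arXiv:1512.01827 — 13 statements merged into one kernel-verified Lean document; each statement's English description precedes it below -/
import Mathlib

section
/- Let κ be an infinite cardinal, L a first-order language with |L| ≤ κ, I a nonempty set, and U an ultrafilter on I which is countably incomplete and which is good for the cofinite subsets of κ, i.e., for every monotone map f from the meet-semilattice of cofinite subsets of κ (ordered by inclusion) into U there exists a map g with g(x) ∈ U, g(x) ⊆ f(x) for all cofinite x ⊆ κ, and g(x ∩ y) = g(x) ∩ g(y) for all cofinite x, y ⊆ κ. Then for every family (M_i)_{i∈I} of nonempty L-structures, the ultraproduct ∏_U M_i is κ⁺-saturated. -/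
open FirstOrder Filter Cardinal

universe u

/-- If `κ` is an infinite cardinal, `L` a language with `|L| ≤ κ`,
`I` a nonempty set, and `U` a countably incomplete ultrafilter on `I` which is good
for the meet-semilattice of cofinite subsets of `κ` (every monotone map from the
cofinite subsets of `κ` into `U` dominates a multiplicative such map), then every
ultraproduct `∏_U M i` of nonempty `L`-structures is `κ⁺`-saturated. -/
theorem stmt_0 (κ : Cardinal.{u}) (hκ : Cardinal.aleph0 ≤ κ)
    (L : FirstOrder.Language.{u, u}) (hL : L.card ≤ κ)
    (I : Type u) [Nonempty I] (U : Ultrafilter I)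
    (hinc : ∃ K : ℕ → Set I, (∀ n : ℕ, K n ∈ U) ∧ ⋂ n : ℕ, K n = ∅)
    (hgood : ∀ f : Set κ.out → Set I,
      (∀ x : Set κ.out, xᶜ.Finite → f x ∈ U) →
      (∀ x y : Set κ.out, xᶜ.Finite → yᶜ.Finite → x ⊆ y → f x ⊆ f y) →
      ∃ g : Set κ.out → Set I,
        (∀ x : Set κ.out, xᶜ.Finite → g x ∈ U ∧ g x ⊆ f x) ∧
        (∀ x y : Set κ.out, xᶜ.Finite → yᶜ.Finite → g (x ∩ y) = g x ∩ g y))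
    (M : I → Type u) [∀ i, L.Structure (M i)] [∀ i, Nonempty (M i)] :
    ∀ A : Set ((U : Filter I).Product M), #A < Order.succ κ →
      ∀ Sigma : Set ((L[[A]]).Formula Unit),
        (∀ T : Finset ((L[[A]]).Formula Unit), (T : Set ((L[[A]]).Formula Unit)) ⊆ Sigma →
          ∃ b : (U : Filter I).Product M, ∀ φ ∈ T, φ.Realize (fun _ : Unit => b)) →
        ∃ b : (U : Filter I).Product M, ∀ φ ∈ Sigma, φ.Realize (fun _ : Unit => b) := by
  classical
  intro A hA Sigma hfin
  rcases Set.eq_empty_or_nonempty Sigma with hS | ⟨φ₀, hφ₀⟩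
  · obtain ⟨b, -⟩ := hfin ∅ (by simp)
    exact ⟨b, fun φ hφ => by simp [hS] at hφ⟩
  -- cardinality bound and enumeration
  have hAκ : #A ≤ κ := Order.lt_succ_iff.1 hA
  have hform : #(L[[A]].Formula Unit) ≤ κ := by
    have h1 : #(L[[A]].Formula Unit) ≤ #(Σ n, L[[A]].BoundedFormula Unit n) :=
      Cardinal.mk_le_of_injective (f := fun φ => (⟨0, φ⟩ : Σ n, L[[A]].BoundedFormula Unit n))
        (fun a b h => by simpa using h)
    refine h1.trans ((Language.BoundedFormula.card_le).trans ?_)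
    have hcard : (L[[A]]).card ≤ κ := by
      rw [Language.card_withConstants]
      simp only [Cardinal.lift_id]
      exact (add_le_add hL hAκ).trans (by rwa [Cardinal.add_eq_self])
    simp only [Cardinal.mk_fintype, Fintype.card_unit, Nat.cast_one, Cardinal.lift_one,
      Cardinal.lift_uzero, Cardinal.lift_id]
    rw [max_le_iff]
    constructor
    · exact hκ
    · calc (1 : Cardinal) + (L[[A]].card)
          ≤ κ + κ := add_le_add (one_le_aleph0.trans hκ) hcard
        _ = κ := Cardinal.add_eq_self hκ
  have hSκ : #Sigma ≤ #(κ.out) := by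
    rw [Cardinal.mk_out]
    exact (Cardinal.mk_set_le Sigma).trans hform
  haveI : Nonempty Sigma := ⟨⟨φ₀, hφ₀⟩⟩
  obtain ⟨emb⟩ := Cardinal.le_def _ _ |>.1 hSκ
  set e : κ.out → Sigma := Function.invFun emb with he_def
  have he : Function.Surjective e := Function.invFun_surjective emb.injective
  set φf : κ.out → L[[A]].Formula Unit := fun α => (e α : L[[A]].Formula Unit) with hφf_def
  have hφf : ∀ α, φf α ∈ Sigma := fun α => (e α).2
  have hsurj : ∀ φ ∈ Sigma, ∃ α, φf α = φ := by
    intro φ hφ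
    obtain ⟨α, hα⟩ := he ⟨φ, hφ⟩
    exact ⟨α, congrArg Subtype.val hα⟩
  -- lifts of parameters
  set toProd : (∀ i, M i) → (U : Filter I).Product M := fun c => ↑c with htoProd
  set aLift : A → ∀ i, M i := fun a => Quotient.out (a : (U : Filter I).Product M) with haLift
  -- translated formulas and pointwise satisfaction predicate
  set ψ : κ.out → L.Formula (↥A ⊕ Unit) :=
    fun α => Language.BoundedFormula.constantsVarsEquiv (φf α) with hψ
  set P : ∀ (α : κ.out) (i : I), M i → Prop :=
    fun α i m => (ψ α).Realize (Sum.elim (fun a : A => aLift a i) (fun _ : Unit => m)) with hP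
  -- Łoś bridge
  have key : ∀ (α : κ.out) (c : ∀ i, M i),
      (φf α).Realize (fun _ : Unit => (toProd c)) ↔ ∀ᶠ i in (U : Filter I), P α i (c i) := by
    intro α c
    have h1 : (φf α).Realize (fun _ : Unit => toProd c) ↔
        (ψ α).Realize (Sum.elim
          (fun a : A => ((L.con a : L[[A]].Constants) : (U : Filter I).Product M))
          (fun _ : Unit => toProd c)) := by
      rw [hψ]
      exact (Language.BoundedFormula.realize_constantsVarsEquiv
        (φ := φf α) (v := fun _ : Unit => toProd c) (xs := default)).symm
    have h2 : (Sum.elim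
        (fun a : A => ((L.con a : L[[A]].Constants) : (U : Filter I).Product M))
        (fun _ : Unit => toProd c)) =
        fun p : ↥A ⊕ Unit => toProd (Sum.elim aLift (fun _ : Unit => c) p) := by
      funext p
      cases p with
      | inl a =>
        simp only [Sum.elim_inl, Language.coe_con, haLift, htoProd]
        exact (Quotient.out_eq _).symm
      | inr u => rfl
    have hfun : ∀ i : I, (fun p : ↥A ⊕ Unit => Sum.elim aLift (fun _ : Unit => c) p i) =
        Sum.elim (fun a : A => aLift a i) (fun _ : Unit => c i) := by
      intro i; funext p; cases p <;> rfl
    refine (h1.trans (iff_of_eq (congrArg _ h2))).trans ?_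
    refine Iff.trans
      (Language.Ultraproduct.realize_formula_cast (ψ α) (Sum.elim aLift (fun _ : Unit => c))) ?_
    exact Filter.eventually_congr (Filter.Eventually.of_forall fun i => by rw [hfun i])
  -- f₀
  set f₀ : Set κ.out → Set I := fun x => { i | ∃ m : M i, ∀ α ∈ xᶜ, P α i m } with hf₀
  have hf₀U : ∀ x : Set κ.out, xᶜ.Finite → f₀ x ∈ U := by
    intro x hx
    set T : Finset (L[[A]].Formula Unit) := hx.toFinset.image φf with hT
    obtain ⟨b, hb⟩ := hfin T (by
      intro φ hφ
      simp only [hT, Finset.coe_image, Set.mem_image, Finset.mem_coe] at hφ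
      obtain ⟨α, -, rfl⟩ := hφ
      exact hφf α)
    obtain ⟨c, hc⟩ := b.exists_rep
    have hc' : toProd c = b := by rw [htoProd]; exact hc
    have hev : ∀ α ∈ xᶜ, ∀ᶠ i in (U : Filter I), P α i (c i) := by
      intro α hα
      have : (φf α).Realize (fun _ : Unit => (toProd c)) := by
        rw [hc']
        apply hb
        simp only [hT, Finset.mem_image]
        exact ⟨α, by simpa using hα, rfl⟩
      exact (key α c).1 this
    have := (Filter.eventually_all_finite hx).2 hev
    refine Filter.mem_of_superset this ?_
    intro i hi
    exact ⟨c i, hi⟩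
  have hf₀mono : ∀ x y : Set κ.out, x ⊆ y → f₀ x ⊆ f₀ y := by
    intro x y hxy i hi
    obtain ⟨m, hm⟩ := hi
    exact ⟨m, fun α hα => hm α (Set.compl_subset_compl.2 hxy hα)⟩
  -- countable incompleteness: decreasing sequence
  obtain ⟨K, hKU, hKempty⟩ := hinc
  set K' : ℕ → Set I := fun n => ⋂ m ∈ Finset.range (n + 1), K m with hK'
  have hK'U : ∀ n, K' n ∈ U := fun n => (Filter.biInter_finset_mem _).2 fun m _ => hKU m
  have hK'anti : ∀ {m n : ℕ}, m ≤ n → K' n ⊆ K' m := by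
    intro m n hmn i hi
    simp only [hK', Set.mem_iInter, Finset.mem_range] at hi ⊢
    intro k hk
    exact hi k (lt_of_lt_of_le hk (by omega))
  have hK'no : ∀ i : I, ∃ n, i ∉ K' n := by
    intro i
    have : i ∉ ⋂ n, K n := by rw [hKempty]; exact Set.notMem_empty i
    simp only [Set.mem_iInter, not_forall] at this
    obtain ⟨n, hn⟩ := this
    refine ⟨n, fun h => hn ?_⟩
    simp only [hK', Set.mem_iInter, Finset.mem_range] at h
    exact h n (by omega)
  choose ni hni using hK'no
  have hK'lt : ∀ (i : I) (n : ℕ), i ∈ K' n → n < ni i := by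
    intro i n h
    by_contra hle
    push_neg at hle
    exact hni i (hK'anti hle h)
  -- f and g
  set f : Set κ.out → Set I := fun x => f₀ x ∩ K' ((xᶜ).ncard) with hf
  have hfU : ∀ x : Set κ.out, xᶜ.Finite → f x ∈ U :=
    fun x hx => Filter.inter_mem (hf₀U x hx) (hK'U _)
  have hfmono : ∀ x y : Set κ.out, xᶜ.Finite → yᶜ.Finite → x ⊆ y → f x ⊆ f y := by
    intro x y hx hy hxy
    apply Set.inter_subset_inter (hf₀mono x y hxy)
    exact hK'anti (Set.ncard_le_ncard (Set.compl_subset_compl.2 hxy) hx)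
  obtain ⟨g, hg1, hg2⟩ := hgood f hfU hfmono
  -- g on complements of finsets
  have hcof : ∀ s : Finset κ.out, ((↑s : Set κ.out)ᶜ)ᶜ.Finite := by
    intro s; rw [compl_compl]; exact s.finite_toSet
  have hginter : ∀ s : Finset κ.out, s.Nonempty →
      g ((↑s : Set κ.out)ᶜ) = ⋂ α ∈ s, g ({α}ᶜ) := by
    intro s hs
    induction hs using Finset.Nonempty.cons_induction with
    | singleton a =>
      ext i
      simp only [Finset.coe_singleton, Set.mem_iInter, Finset.mem_singleton]
      exact ⟨fun h β hβ => hβ ▸ h, fun h => h a rfl⟩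
    | cons a s ha hs ih =>
      have hcoe : (↑(Finset.cons a s ha) : Set κ.out) = {a} ∪ ↑s := by
        rw [Finset.coe_cons, Set.insert_eq]
      rw [hcoe, Set.compl_union,
        hg2 _ _ (by rw [compl_compl]; exact Set.finite_singleton a)
          (by rw [compl_compl]; exact s.finite_toSet), ih]
      ext i
      simp only [Set.mem_inter_iff, Set.mem_iInter, Finset.mem_cons]
      constructor
      · rintro ⟨h1, h2⟩ β (rfl | hβ)
        · exact h1
        · exact h2 β hβ
      · intro h
        exact ⟨h a (Or.inl rfl), fun β hβ => h β (Or.inr hβ)⟩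
  -- the finite trace sets
  set Sig : I → Set κ.out := fun i => {α | i ∈ g ({α}ᶜ)} with hSig
  have hgF : ∀ (i : I) (t : Finset κ.out), t.Nonempty → (↑t : Set κ.out) ⊆ Sig i →
      i ∈ f ((↑t : Set κ.out)ᶜ) := by
    intro i t ht hts
    have hi : i ∈ g ((↑t : Set κ.out)ᶜ) := by
      rw [hginter t ht]
      exact Set.mem_iInter₂.2 fun α hα => hts hα
    exact (hg1 _ (hcof t)).2 hi
  have hfK : ∀ (i : I) (t : Finset κ.out), i ∈ f ((↑t : Set κ.out)ᶜ) → t.card < ni i := by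
    intro i t hi
    have : i ∈ K' ((((↑t : Set κ.out)ᶜ)ᶜ).ncard) := hi.2
    rw [compl_compl, Set.ncard_coe_finset] at this
    exact hK'lt i _ this
  have hSigfin : ∀ i : I, (Sig i).Finite := by
    intro i
    by_contra hinf
    obtain ⟨t, hts, htcard⟩ :=
      Set.Infinite.exists_subset_card_eq (show (Sig i).Infinite from hinf) (ni i + 1)
    have hne : t.Nonempty := Finset.card_pos.1 (by omega)
    have := hfK i t (hgF i t hne hts)
    omega
  -- choose witnesses
  have hwit : ∀ i : I, ∃ m : M i, ∀ α ∈ Sig i, P α i m := by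
    intro i
    rcases Set.eq_empty_or_nonempty (Sig i) with h | h
    · obtain ⟨m⟩ := (inferInstance : Nonempty (M i))
      exact ⟨m, fun α hα => by rw [h] at hα; exact absurd hα (Set.notMem_empty α)⟩
    · set t := (hSigfin i).toFinset with ht
      have htSig : (↑t : Set κ.out) = Sig i := (hSigfin i).coe_toFinset
      have htne : t.Nonempty := by
        rw [← Finset.coe_nonempty, htSig]; exact h
      have hif : i ∈ f ((↑t : Set κ.out)ᶜ) := hgF i t htne (by rw [htSig])
      obtain ⟨m, hm⟩ := hif.1
      refine ⟨m, fun α hα => hm α ?_⟩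
      rw [compl_compl, htSig]
      exact hα
  choose bfun hbfun using hwit
  -- conclude
  refine ⟨toProd bfun, ?_⟩
  intro φ hφ
  obtain ⟨α, rfl⟩ := hsurj φ hφ
  rw [key α bfun]
  have hgU : g ({α}ᶜ) ∈ U := (hg1 _ (by rw [compl_compl]; exact Set.finite_singleton α)).1
  refine Filter.mem_of_superset hgU ?_
  intro i hi
  exact hbfun i α hi
end

section
/- Let U be a countably incomplete ultrafilter on a set I. Then for every monotone map f from the meet-semilattice of cofinite subsets of ℕ (ordered by inclusion) into U, there exists a map g such that g(x) ∈ U and g(x) ⊆ f(x) for every cofinite x ⊆ ℕ, and g(x ∩ y) = g(x) ∩ g(y) for all cofinite x, y ⊆ ℕ. -/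
/-- A countably incomplete ultrafilter `U` on `I` is good for the
meet-semilattice of cofinite subsets of `ℕ`: every monotone map `f` from the
cofinite subsets of `ℕ` into `U` dominates a multiplicative map `g` into `U`. -/
theorem stmt_1 {I : Type*} (U : Ultrafilter I)
    (hinc : ∃ K : ℕ → Set I, (∀ n : ℕ, K n ∈ U) ∧ ⋂ n : ℕ, K n = ∅)
    (f : Set ℕ → Set I)
    (hfU : ∀ x : Set ℕ, xᶜ.Finite → f x ∈ U)
    (hfmono : ∀ x y : Set ℕ, xᶜ.Finite → yᶜ.Finite → x ⊆ y → f x ⊆ f y) :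
    ∃ g : Set ℕ → Set I,
      (∀ x : Set ℕ, xᶜ.Finite → g x ∈ U ∧ g x ⊆ f x) ∧
      (∀ x y : Set ℕ, xᶜ.Finite → yᶜ.Finite → g (x ∩ y) = g x ∩ g y) := by
  classical
  obtain ⟨K, hKU, hKempty⟩ := hinc
  -- the cofinite subsets of ℕ are countable
  have hcnt : Countable {x : Set ℕ // xᶜ.Finite} := by
    have hinj : Function.Injective (fun x : {x : Set ℕ // xᶜ.Finite} => x.2.toFinset) := by
      intro x y hxy
      simp only at hxy
      have h2 : ((x.2.toFinset : Finset ℕ) : Set ℕ) = ((y.2.toFinset : Finset ℕ) : Set ℕ) :=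
        congrArg _ hxy
      rw [x.2.coe_toFinset, y.2.coe_toFinset] at h2
      exact Subtype.ext (compl_injective h2)
    exact hinj.countable
  have hne : Nonempty {x : Set ℕ // xᶜ.Finite} := ⟨⟨Set.univ, by simp⟩⟩
  obtain ⟨e, he⟩ := exists_surjective_nat {x : Set ℕ // xᶜ.Finite}
  -- decreasing cofinite sets T n = ⋂_{m ≤ n} e m
  set T : ℕ → Set ℕ := fun n => Nat.rec (e 0).1 (fun k acc => acc ∩ (e (k+1)).1) n with hT
  have hTstep : ∀ n, T (n+1) ⊆ T n := fun n => Set.inter_subset_left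
  have hTmono : ∀ m n, m ≤ n → T n ⊆ T m := by
    intro m n hmn
    induction n with
    | zero =>
      have : m = 0 := by omega
      subst this; exact subset_rfl
    | succ k ih =>
      rcases Nat.lt_or_ge m (k+1) with h | h
      · exact (hTstep k).trans (ih (by omega))
      · have : m = k + 1 := by omega
        subst this; rfl
  have hTsub : ∀ n, T n ⊆ (e n).1 := by
    intro n; cases n with
    | zero => exact subset_rfl
    | succ k => exact Set.inter_subset_right
  have hTcof : ∀ n, (T n)ᶜ.Finite := by
    intro n
    induction n with
    | zero => exact (e 0).2
    | succ k ih =>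
      show ((T k ∩ (e (k+1)).1)ᶜ).Finite
      rw [Set.compl_inter]
      exact ih.union (e (k+1)).2
  -- decreasing U-sets J n
  set J : ℕ → Set I := fun n =>
    Nat.rec (K 0 ∩ f (T 0)) (fun k acc => acc ∩ (K (k+1) ∩ f (T (k+1)))) n with hJ
  have hJU : ∀ n, J n ∈ U := by
    intro n
    induction n with
    | zero => exact U.toFilter.inter_mem (hKU 0) (hfU _ (hTcof 0))
    | succ k ih =>
      exact U.toFilter.inter_mem ih (U.toFilter.inter_mem (hKU (k+1)) (hfU _ (hTcof (k+1))))
  have hJstep : ∀ n, J (n+1) ⊆ J n := fun n => Set.inter_subset_left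
  have hJmono : ∀ m n, m ≤ n → J n ⊆ J m := by
    intro m n hmn
    induction n with
    | zero => have : m = 0 := by omega
              subst this; rfl
    | succ k ih =>
      rcases Nat.lt_or_ge m (k+1) with h | h
      · exact (hJstep k).trans (ih (by omega))
      · have : m = k + 1 := by omega
        subst this; rfl
  have hJK : ∀ n, J n ⊆ K n := by
    intro n; cases n with
    | zero => exact Set.inter_subset_left
    | succ k => exact Set.inter_subset_right.trans Set.inter_subset_left
  have hJf : ∀ n, J n ⊆ f (T n) := by
    intro n; cases n with
    | zero => exact Set.inter_subset_right
    | succ k => exact Set.inter_subset_right.trans Set.inter_subset_right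
  have hJdead : ∀ i : I, ∃ m, i ∉ J m := by
    intro i
    by_contra h
    push_neg at h
    have : i ∈ ⋂ n, K n := Set.mem_iInter.2 fun n => hJK n (h n)
    rw [hKempty] at this
    exact this
  -- the multiplicative refinement
  refine ⟨fun x => {i | ∃ k, i ∈ J k ∧ i ∉ J (k+1) ∧ T k ⊆ x}, ?_, ?_⟩
  · intro x hx
    constructor
    · -- g x ∈ U : it contains J n where e n = x
      obtain ⟨n, hn⟩ := he ⟨x, hx⟩
      refine U.toFilter.mem_of_superset (hJU n) ?_
      intro i hi
      have hm := hJdead i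
      set m := Nat.find hm with hmdef
      have hmspec : i ∉ J m := Nat.find_spec hm
      have hnm : n < m := by
        by_contra h
        push_neg at h
        exact hmspec (hJmono m n h hi)
      have hmpos : 0 < m := by omega
      refine ⟨m - 1, ?_, ?_, ?_⟩
      · exact not_not.1 (Nat.find_min hm (by omega : m - 1 < m))
      · have : m - 1 + 1 = m := by omega
        rw [this]; exact hmspec
      · have hTn : T (m-1) ⊆ T n := hTmono n (m-1) (by omega)
        have : T n ⊆ x := by
          have := hTsub n
          rw [hn] at this
          exact this
        exact hTn.trans this
    · -- g x ⊆ f x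
      rintro i ⟨k, hik, -, hTk⟩
      exact hfmono (T k) x (hTcof k) hx hTk (hJf k hik)
  · intro x y hx hy
    ext i
    simp only [Set.mem_setOf_eq, Set.mem_inter_iff]
    constructor
    · rintro ⟨k, h1, h2, h3⟩
      exact ⟨⟨k, h1, h2, fun a ha => (h3 ha).1⟩, ⟨k, h1, h2, fun a ha => (h3 ha).2⟩⟩
    · rintro ⟨⟨k, h1, h2, h3⟩, ⟨k', h1', h2', h3'⟩⟩
      have hkk : k = k' := by
        by_contra h
        rcases Nat.lt_or_ge k k' with hlt | hge
        · exact h2 (hJmono (k+1) k' hlt h1')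
        · have : k' < k := by omega
          exact h2' (hJmono (k'+1) k this h1)
      subst hkk
      exact ⟨k, h1, h2, fun a ha => ⟨h3 ha, h3' ha⟩⟩
end

section
/- Let κ be an infinite cardinal and X a meet-semilattice with |X| ≤ κ. Then there exists a countably incomplete ultrafilter U on κ which is X-good: for every monotone map f : X → U (meaning f(x) ∈ U for all x, and x ≤ y implies f(x) ⊆ f(y)) there exists g : X → U with g(x) ⊆ f(x) for all x ∈ X and g(x ⊓ y) = g(x) ∩ g(y) for all x, y ∈ X. -/
/-!
Kunen's construction. The Engelking–Karłowicz construction gives `2^|I|` independent functions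
`σ A : I → I`: any finitely many of them take any prescribed values at a common point. Along a
well-order of type `2^|I|` enumerating the monotone maps `f : X → 𝒫 I`, we shrink a filter `F`
while keeping it independent modulo a set `U` of used indices: every member of `F` meets every
finite pattern of the unused functions. Each stage uses at most `|I|` new indices, so fewer than
`2^|I|` are used before any stage.

At the stage of `f`, either some `(f x)ᶜ` can be added to `F`, and then no ultrafilter above `F`
contains all the `f x`; or every `f x` contains some `b ∩ pattern` with `b ∈ F`. In the second case
a fresh function `a` codes the points of `X`, and `g x = {p | ∃ y ≤ x, a p = y ∧ p ∈ f y}` is a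
multiplicative refinement of `f` whose values can be added to `F`: a point of `b ∩ pattern` at
which `a` takes the value `x` lies in `g x`.

Starting from the preimages of the tails of `ℕ` under one of the functions makes every ultrafilter
above the final `F` countably incomplete.
-/

open Cardinal Filter Set Function

universe u

namespace GoodUltrafilter

variable {I J : Type u}

def pattern (σ : J → I → I) (s : Finset J) (v : J → I) : Set I :=
  {p | ∀ j ∈ s, σ j p = v j}

def IsIndependent (σ : J → I → I) : Prop :=
  ∀ (s : Finset J) (v : J → I), (pattern σ s v).Nonempty

def IsIndependentMod (σ : J → I → I) (F : Filter I) (U : Set J) : Prop :=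
  ∀ b ∈ F, ∀ s : Finset J, Disjoint (s : Set J) U → ∀ v : J → I, (b ∩ pattern σ s v).Nonempty

theorem pattern_insert_update [DecidableEq J] (σ : J → I → I) {s : Finset J} {j : J}
    (hj : j ∉ s) (v : J → I) (w : I) :
    pattern σ (insert j s) (update v j w) = σ j ⁻¹' {w} ∩ pattern σ s v := by
  ext p
  simp only [pattern, Finset.forall_mem_insert, update_self, mem_ofPred_eq, mem_inter_iff,
    mem_preimage, mem_singleton_iff]
  refine and_congr_right fun _ => forall₂_congr fun k hk => ?_
  rw [update_of_ne (ne_of_mem_of_not_mem hk hj)]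

theorem pattern_union_piecewise [DecidableEq J] (σ : J → I → I) {s t : Finset J}
    (hst : Disjoint s t) (v w : J → I) :
    pattern σ (s ∪ t) (s.piecewise v w) = pattern σ s v ∩ pattern σ t w := by
  ext p
  simp only [pattern, Finset.forall_mem_union, mem_ofPred_eq, mem_inter_iff]
  refine and_congr (forall₂_congr fun k hk => ?_) (forall₂_congr fun k hk => ?_)
  · rw [Finset.piecewise_eq_of_mem _ _ _ hk]
  · rw [Finset.piecewise_eq_of_notMem _ _ _ (Finset.disjoint_right.1 hst hk)]

theorem exists_finset_injOn_inter [Nonempty I] (𝒜 : Finset (Set I)) :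
    ∃ s : Finset I, InjOn (fun A => (s : Set I) ∩ A) 𝒜 := by
  have hsep : ∀ A B : Set I, ∃ x, (x ∈ A ↔ x ∈ B) → A = B := by
    intro A B
    by_cases hAB : A = B
    · exact ⟨Classical.arbitrary I, fun _ => hAB⟩
    · obtain ⟨x, hx⟩ := not_forall.1 (mt Set.ext hAB)
      exact ⟨x, fun h => absurd h hx⟩
  choose sep hsep using hsep
  classical
  refine ⟨(𝒜 ×ˢ 𝒜).image fun q => sep q.1 q.2, fun A hA B hB hAB => hsep A B ?_⟩
  have hmem : sep A B ∈ (𝒜 ×ˢ 𝒜).image fun q => sep q.1 q.2 :=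
    Finset.mem_image.2 ⟨(A, B), Finset.mk_mem_product hA hB, rfl⟩
  simpa only [mem_inter_iff, Finset.mem_coe, hmem, true_and] using Set.ext_iff.1 hAB (sep A B)

abbrev LabelledFinset (I : Type u) : Type u :=
  Σ s : Finset I, 𝒫 (s : Set I) → I

theorem mk_labelledFinset_le [Infinite I] : #(LabelledFinset I) ≤ #I := by
  rw [LabelledFinset, mk_sigma]
  calc sum (fun s : Finset I => #(𝒫 (s : Set I) → I)) ≤ sum fun _ : Finset I => #I :=
        sum_le_sum _ _ fun s => by
          obtain ⟨n, hn⟩ := lt_aleph0.1 s.finite_toSet.powerset.lt_aleph0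
          rw [← power_def, hn]
          exact power_nat_le (aleph0_le_mk I)
    _ = #I := by rw [sum_const', mk_finset_of_infinite, mul_eq_self (aleph0_le_mk I)]

theorem exists_isIndependent [Infinite I] : ∃ σ : Set I → I → I, IsIndependent σ := by
  obtain ⟨ψ⟩ := (le_def _ _).1 (mk_labelledFinset_le (I := I))
  have : Nonempty (LabelledFinset I) := ⟨⟨∅, fun _ => Classical.arbitrary I⟩⟩
  refine ⟨fun A p => (invFun ψ p).2 ⟨(invFun ψ p).1 ∩ A, inter_subset_left⟩, fun 𝒜 v => ?_⟩
  -- once `s` separates the sets of `𝒜`, the labels of the traces `s ∩ A` can be chosen freely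
  obtain ⟨s, hs⟩ := exists_finset_injOn_inter 𝒜
  classical
  let φ : 𝒫 (s : Set I) → I := fun u =>
    if hu : ∃ A ∈ 𝒜, (s : Set I) ∩ A = u then v hu.choose else Classical.arbitrary I
  refine ⟨ψ ⟨s, φ⟩, fun A hA => ?_⟩
  have hex : ∃ B ∈ 𝒜, (s : Set I) ∩ B = (s : Set I) ∩ A := ⟨A, hA, rfl⟩
  dsimp only
  rw [leftInverse_invFun ψ.injective]
  simp only [φ, dif_pos hex]
  exact congrArg v (hs hex.choose_spec.1 hA hex.choose_spec.2)

variable {σ : J → I → I}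

namespace IsIndependentMod

variable {F : Filter I} {U : Set J}

theorem mono_right (hF : IsIndependentMod σ F U) {U' : Set J} (hU : U ⊆ U') :
    IsIndependentMod σ F U' :=
  fun b hb s hs => hF b hb s (hs.mono_right hU)

theorem neBot [Nonempty I] (hF : IsIndependentMod σ F U) : F.NeBot :=
  forall_mem_nonempty_iff_neBot.1 fun b hb =>
    (hF b hb ∅ (by simp) fun _ => Classical.arbitrary I).mono inter_subset_left

theorem inf_iInf {ι : Sort*} {F₀ : Filter I} {F : ι → Filter I}
    (h₀ : IsIndependentMod σ F₀ U) (hF : ∀ i, IsIndependentMod σ (F i) U) (hle : ∀ i, F i ≤ F₀)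
    (hdir : Directed (· ≥ ·) F) : IsIndependentMod σ (F₀ ⊓ ⨅ i, F i) U := by
  rcases isEmpty_or_nonempty ι with hι | hι
  · simpa using h₀
  rw [inf_eq_right.2 (iInf_le_of_le (Classical.arbitrary ι) (hle _))]
  intro b hb
  obtain ⟨i, hi⟩ := (mem_iInf_of_directed hdir b).1 hb
  exact hF i b hi

end IsIndependentMod

theorem isIndependentMod_comap (hσ : IsIndependent σ) (G : Filter I) [G.NeBot] (j₀ : J) :
    IsIndependentMod σ (G.comap (σ j₀)) {j₀} := by
  classical
  intro b hb s hs v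
  obtain ⟨c, hc, hcb⟩ := mem_comap.1 hb
  obtain ⟨w, hw⟩ := G.nonempty_of_mem hc
  have hj₀ : j₀ ∉ s := fun hj => disjoint_left.1 hs hj rfl
  obtain ⟨p, hpw, hp⟩ := pattern_insert_update σ hj₀ v w ▸ hσ (insert j₀ s) (update v j₀ w)
  exact ⟨p, hcb (show σ j₀ p ∈ c from (mem_singleton_iff.1 hpw).symm ▸ hw), hp⟩

theorem exists_inter_pattern_subset_of_not_isIndependentMod {F : Filter I} {U : Set J}
    {B : Set I} (hB : ¬IsIndependentMod σ (F ⊓ 𝓟 Bᶜ) U) :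
    ∃ b ∈ F, ∃ s : Finset J, Disjoint (s : Set J) U ∧ ∃ v, b ∩ pattern σ s v ⊆ B := by
  unfold IsIndependentMod at hB
  push Not at hB
  obtain ⟨b, hb, s, hs, v, hempty⟩ := hB
  refine ⟨{p | p ∈ Bᶜ → p ∈ b}, mem_inf_principal.1 hb, s, hs, v, fun p ⟨hpb, hps⟩ => ?_⟩
  by_contra hpB
  exact hempty.subset ⟨hpb hpB, hps⟩

theorem mk_iUnion_finset_le [Infinite I] {X : Type u} (hX : #X ≤ #I) (s : X → Finset J) :
    #(⋃ x, (s x : Set J)) ≤ #I :=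
  calc #(⋃ x, (s x : Set J)) ≤ #X * ⨆ x, #(s x : Set J) := mk_iUnion_le _
    _ ≤ #I * ℵ₀ := mul_le_mul' hX (ciSup_le' fun x => (s x).finite_toSet.lt_aleph0.le)
    _ = #I := mul_aleph0_eq (aleph0_le_mk I)

section Refinement

variable {X : Type*} [SemilatticeInf X]

def HasMultiplicativeRefinement (F : Filter I) (f : X → Set I) : Prop :=
  ∃ g : X → Set I, (∀ x, g x ∈ F) ∧ (∀ x, g x ⊆ f x) ∧ ∀ x y, g (x ⊓ y) = g x ∩ g y

theorem HasMultiplicativeRefinement.mono {F G : Filter I} {f : X → Set I} (hGF : G ≤ F)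
    (hf : HasMultiplicativeRefinement F f) : HasMultiplicativeRefinement G f :=
  let ⟨g, hgF, hgf, hg⟩ := hf
  ⟨g, fun x => hGF (hgF x), hgf, hg⟩

def refineAlong (ι : X ↪ I) (a : I → I) (f : X → Set I) (x : X) : Set I :=
  {p | ∃ y ≤ x, a p = ι y ∧ p ∈ f y}

variable {ι : X ↪ I} {a : I → I} {f : X → Set I}

theorem refineAlong_subset (hf : Monotone f) (x : X) : refineAlong ι a f x ⊆ f x := by
  rintro p ⟨y, hyx, -, hp⟩
  exact hf hyx hp

theorem refineAlong_mono : Monotone (refineAlong ι a f) := by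
  rintro x x' hx p ⟨y, hyx, hp⟩
  exact ⟨y, hyx.trans hx, hp⟩

theorem refineAlong_inf (x x' : X) :
    refineAlong ι a f (x ⊓ x') = refineAlong ι a f x ∩ refineAlong ι a f x' := by
  refine (subset_inter (refineAlong_mono inf_le_left) (refineAlong_mono inf_le_right)).antisymm ?_
  rintro p ⟨⟨y, hyx, hpy, hp⟩, ⟨y', hyx', hpy', -⟩⟩
  obtain rfl := ι.injective (hpy.symm.trans hpy')
  exact ⟨y, le_inf hyx hyx', hpy, hp⟩

theorem mem_refineAlong {p : I} {x : X} (ha : a p = ι x) (hp : p ∈ f x) :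
    p ∈ refineAlong ι a f x :=
  ⟨x, le_rfl, ha, hp⟩

theorem IsIndependentMod.inf_iInf_principal_refineAlong {F : Filter I} {U : Set J}
    (hF : IsIndependentMod σ F U) (ι : X ↪ I) {b : X → Set I} (hb : ∀ x, b x ∈ F)
    {s : X → Finset J} (hs : ∀ x, Disjoint (s x : Set J) U) {v : X → J → I}
    (hsub : ∀ x, b x ∩ pattern σ (s x) (v x) ⊆ f x) {j : J}
    (hj : j ∉ U ∪ ⋃ x, (s x : Set J)) :
    IsIndependentMod σ (F ⊓ ⨅ x, 𝓟 (refineAlong ι (σ j) f x))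
      (U ∪ insert j (⋃ x, (s x : Set J))) := by
  classical
  rcases isEmpty_or_nonempty X with hX | hX
  · rw [iInf_of_empty, inf_top_eq]
    exact hF.mono_right subset_union_left
  intro B hB s₀ hs₀ v₀
  obtain ⟨b₀, hb₀, c, hc, hB⟩ := mem_inf_iff_superset.1 hB
  obtain ⟨x, -, hx⟩ := (hasBasis_iInf_principal refineAlong_mono.directed_ge).mem_iff.1 hc
  have hjs₀ : j ∉ s₀ := fun hj₀ => disjoint_left.1 hs₀ hj₀ (Or.inr (mem_insert _ _))
  have hjs : j ∉ s x := fun hjx => hj (Or.inr (mem_iUnion.2 ⟨x, hjx⟩))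
  have hs₀s : Disjoint s₀ (s x) := Finset.disjoint_left.2 fun k hk hkx =>
    disjoint_left.1 hs₀ hk (Or.inr (mem_insert_of_mem _ (mem_iUnion.2 ⟨x, hkx⟩)))
  have hdisj : Disjoint (↑(insert j (s₀ ∪ s x)) : Set J) U := by
    simp only [Finset.coe_insert, Finset.coe_union, disjoint_insert_left, disjoint_union_left]
    exact ⟨fun hjU => hj (Or.inl hjU), hs₀.mono_right subset_union_left, hs x⟩
  obtain ⟨p, ⟨hpb₀, hpb⟩, hp⟩ := hF (b₀ ∩ b x) (inter_mem hb₀ (hb x)) _ hdisj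
    (update (s₀.piecewise v₀ (v x)) j (ι x))
  rw [pattern_insert_update σ (by simp [hjs₀, hjs]), pattern_union_piecewise σ hs₀s] at hp
  obtain ⟨hpj, hp₀, hpx⟩ := hp
  exact ⟨p, hB ⟨hpb₀, hx (mem_refineAlong hpj (hsub x ⟨hpb, hpx⟩))⟩, hp₀⟩

end Refinement

section Step

variable {X : Type u} [SemilatticeInf X]

def Resolves (F : Filter I) (f : X → Set I) : Prop :=
  (∃ x, (f x)ᶜ ∈ F) ∨ HasMultiplicativeRefinement F f

theorem Resolves.mono {F G : Filter I} {f : X → Set I} (hGF : G ≤ F) (hf : Resolves F f) :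
    Resolves G f :=
  hf.imp (fun ⟨x, hx⟩ => ⟨x, hGF hx⟩) (HasMultiplicativeRefinement.mono hGF)

theorem IsIndependentMod.exists_refinement [Infinite I] {F : Filter I} {U : Set J}
    (hF : IsIndependentMod σ F U) (hU : #U < #J) (hIJ : #I < #J) (hX : #X ≤ #I)
    {f : X → Set I} (hf : Monotone f)
    (hbasic : ∀ x, ∃ b ∈ F, ∃ s : Finset J, Disjoint (s : Set J) U ∧
      ∃ v, b ∩ pattern σ s v ⊆ f x) :
    ∃ F' ≤ F, ∃ N : Set J, #N ≤ #I ∧ IsIndependentMod σ F' (U ∪ N) ∧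
      HasMultiplicativeRefinement F' f := by
  choose b hb s hs v hsub using hbasic
  obtain ⟨ι⟩ := (le_def X I).1 hX
  have hJ : ℵ₀ ≤ #J := (aleph0_le_mk I).trans hIJ.le
  obtain ⟨j, hj⟩ : (U ∪ ⋃ x, (s x : Set J))ᶜ.Nonempty := compl_nonempty_of_mk_lt_mk <|
    (mk_union_le _ _).trans_lt (add_lt_of_lt hJ hU ((mk_iUnion_finset_le hX s).trans_lt hIJ))
  refine ⟨_, inf_le_left, _, ?_, hF.inf_iInf_principal_refineAlong ι hb hs hsub hj,
    refineAlong ι (σ j) f, fun x => mem_inf_of_right (mem_iInf_of_mem x (mem_principal_self _)),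
    refineAlong_subset hf, refineAlong_inf⟩
  calc #(insert j (⋃ x, (s x : Set J)) : Set J) ≤ #I + 1 :=
        mk_insert_le.trans (add_le_add_left (mk_iUnion_finset_le hX s) 1)
    _ = #I := add_one_eq (aleph0_le_mk I)

theorem exists_resolving_extension [Infinite I] (hIJ : #I < #J) (hX : #X ≤ #I) {f : X → Set I}
    (hf : Monotone f) (F : Filter I) (U : Set J) :
    ∃ q : Filter I × Set J, q.1 ≤ F ∧ #q.2 ≤ #I ∧
      (IsIndependentMod σ F U → #U < #J →
        IsIndependentMod σ q.1 (U ∪ q.2) ∧ Resolves q.1 f) := by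
  by_cases hFU : IsIndependentMod σ F U ∧ #U < #J
  swap
  · exact ⟨(F, ∅), le_rfl, by simp, fun hF hU => absurd ⟨hF, hU⟩ hFU⟩
  obtain ⟨hF, hU⟩ := hFU
  by_cases hx : ∃ x, IsIndependentMod σ (F ⊓ 𝓟 (f x)ᶜ) U
  · obtain ⟨x, hx⟩ := hx
    exact ⟨(F ⊓ 𝓟 (f x)ᶜ, ∅), inf_le_left, by simp,
      fun _ _ => ⟨by simpa using hx, Or.inl ⟨x, mem_inf_of_right (mem_principal_self _)⟩⟩⟩
  push Not at hx
  obtain ⟨F', hF', N, hN, hind, href⟩ := hF.exists_refinement hU hIJ hX hf fun x =>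
    exists_inter_pattern_subset_of_not_isIndependentMod (hx x)
  exact ⟨(F', N), hF', hN, fun _ _ => ⟨hind, Or.inr href⟩⟩

end Step

section Recursion

variable {T : Type u} [LinearOrder T] [WellFoundedLT T]
  (F₀ : Filter I) (U₀ : Set J) (next : T → Filter I × Set J → Filter I × Set J)

def accumulate {ι : Sort*} (p : ι → Filter I × Set J) : Filter I × Set J :=
  (F₀ ⊓ ⨅ i, (p i).1, U₀ ∪ ⋃ i, (p i).2)

def stage : T → Filter I × Set J :=
  wellFounded_lt.fix fun t S => next t (accumulate F₀ U₀ fun s : Iio t => S s s.2)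

def prior (t : T) : Filter I × Set J :=
  accumulate F₀ U₀ fun s : Iio t => stage F₀ U₀ next s

theorem stage_eq (t : T) : stage F₀ U₀ next t = next t (prior F₀ U₀ next t) :=
  wellFounded_lt.fix_eq _ t

variable {F₀ U₀ next}

theorem stage_fst_le (hle : ∀ t p, (next t p).1 ≤ p.1) (t : T) :
    (stage F₀ U₀ next t).1 ≤ F₀ :=
  stage_eq F₀ U₀ next t ▸ (hle _ _).trans inf_le_left

theorem stage_fst_antitone (hle : ∀ t p, (next t p).1 ≤ p.1) :
    Antitone fun t => (stage F₀ U₀ next t).1 := by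
  intro s t hst
  rcases hst.eq_or_lt with rfl | hst
  · exact le_rfl
  · dsimp only
    rw [stage_eq]
    exact (hle _ _).trans <| inf_le_right.trans <|
      iInf_le (fun r : Iio t => (stage F₀ U₀ next r).1) ⟨s, hst⟩

theorem card_prior_snd_lt [Infinite I] (hcard : ∀ t p, #(next t p).2 ≤ #I) (hU₀ : #U₀ < #J)
    (hIJ : #I < #J) (hT : ∀ t : T, #(Iio t) < #J) (t : T) :
    #(prior F₀ U₀ next t).2 < #J := by
  have hJ : ℵ₀ ≤ #J := (aleph0_le_mk I).trans hIJ.le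
  calc #(U₀ ∪ ⋃ s : Iio t, (stage F₀ U₀ next s).2 : Set J)
      ≤ #U₀ + #(Iio t) * ⨆ s : Iio t, #(stage F₀ U₀ next s).2 :=
        (mk_union_le _ _).trans (add_le_add_right (mk_iUnion_le _) _)
    _ ≤ #U₀ + #(Iio t) * #I := by
        gcongr
        exact ciSup_le' fun s => stage_eq F₀ U₀ next s ▸ hcard _ _
    _ < #J := add_lt_of_lt hJ hU₀ (mul_lt_of_lt hJ (hT t) hIJ)

theorem isIndependentMod_prior [Infinite I] (h₀ : IsIndependentMod σ F₀ U₀)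
    (hle : ∀ t p, (next t p).1 ≤ p.1) (hcard : ∀ t p, #(next t p).2 ≤ #I)
    (hnext : ∀ t p, IsIndependentMod σ p.1 p.2 → #p.2 < #J →
      IsIndependentMod σ (next t p).1 (p.2 ∪ (next t p).2))
    (hU₀ : #U₀ < #J) (hIJ : #I < #J) (hT : ∀ t : T, #(Iio t) < #J) (t : T) :
    IsIndependentMod σ (prior F₀ U₀ next t).1 (prior F₀ U₀ next t).2 := by
  induction t using WellFoundedLT.induction with
  | ind t IH =>
  refine (h₀.mono_right subset_union_left).inf_iInf (fun s => ?_) (fun s => stage_fst_le hle s)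
    ((stage_fst_antitone hle).comp_monotone (Subtype.mono_coe _)).directed_ge
  have hs := stage_eq F₀ U₀ next s ▸
    hnext s _ (IH s s.2) (card_prior_snd_lt hcard hU₀ hIJ hT s)
  refine hs.mono_right (union_subset (union_subset_union_right _ ?_)
    (subset_union_right.trans' (subset_iUnion (fun r : Iio t => (stage F₀ U₀ next r).2) s)))
  exact iUnion_subset fun r => subset_iUnion_of_subset ⟨r, r.2.trans s.2⟩ subset_rfl

end Recursion

theorem exists_resolving_filter [Infinite I] {X : Type u} [SemilatticeInf X]
    (hIJ : #I < #J) (hX : #X ≤ #I) {T : Type u} [LinearOrder T] [WellFoundedLT T]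
    (hT : ∀ t : T, #(Iio t) < #J) (φ : T → X → Set I) (hφ : ∀ t, Monotone (φ t))
    {F₀ : Filter I} {U₀ : Set J} (h₀ : IsIndependentMod σ F₀ U₀) (hU₀ : #U₀ < #J) :
    ∃ F ≤ F₀, F.NeBot ∧ ∀ t, Resolves F (φ t) := by
  choose next hle hcard hnext using fun t (p : Filter I × Set J) =>
    exists_resolving_extension (σ := σ) hIJ hX (hφ t) p.1 p.2
  have hprior := isIndependentMod_prior h₀ hle hcard (fun t p hp hpU => (hnext t p hp hpU).1)
    hU₀ hIJ hT
  have hstage t := stage_eq F₀ U₀ next t ▸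
    hnext t _ (hprior t) (card_prior_snd_lt hcard hU₀ hIJ hT t)
  refine ⟨F₀ ⊓ ⨅ t, (stage F₀ U₀ next t).1, inf_le_left, ?_, fun t => ?_⟩
  · refine IsIndependentMod.neBot (σ := σ) (U := univ) ?_
    exact (h₀.mono_right (subset_univ _)).inf_iInf
      (fun t => (hstage t).1.mono_right (subset_univ _)) (stage_fst_le hle)
      (stage_fst_antitone hle).directed_ge
  · exact (hstage t).2.mono (inf_le_right.trans (iInf_le _ t))

theorem mk_arrow_set_le [Infinite I] {X : Type u} (hX : #X ≤ #I) : #(X → Set I) ≤ #(Set I) := by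
  rw [← power_def, mk_set, ← power_mul]
  exact power_le_power_left two_ne_zero
    ((mul_le_mul_right hX _).trans_eq (mul_eq_self (aleph0_le_mk I)))

theorem exists_countablyIncomplete_good_ultrafilter (I : Type u) [Infinite I] {X : Type u}
    [SemilatticeInf X] (hX : #X ≤ #I) :
    ∃ U : Ultrafilter I, (∃ K : ℕ → Set I, (∀ n, K n ∈ U) ∧ ⋂ n, K n = ∅) ∧
      ∀ f : X → Set I, (∀ x, f x ∈ U) → Monotone f →
        HasMultiplicativeRefinement (U : Filter I) f := by
  obtain ⟨σ, hσ⟩ := exists_isIndependent (I := I)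
  have hI : #I < #(Set I) := mk_set (α := I) ▸ cantor _
  obtain ⟨ψ⟩ := (le_def {f : X → Set I // Monotone f} (#(Set I)).ord.ToType).1 <|
    (mk_subtype_le _).trans ((mk_arrow_set_le hX).trans_eq (mk_ord_toType _).symm)
  have : Nonempty {f : X → Set I // Monotone f} := ⟨⟨fun _ => univ, monotone_const⟩⟩
  let e : I → ℕ := invFun (Infinite.natEmbedding I)
  have : (atTop.comap e).NeBot :=
    atTop_neBot.comap_of_surj (invFun_surjective (Infinite.natEmbedding I).injective)
  obtain ⟨F, hF₀, hF, hres⟩ := exists_resolving_filter hI hX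
    (fun t => (mk_Iio_lt t (by simp)).trans_eq (mk_ord_toType _))
    (fun t => (invFun ψ t).1) (fun t => (invFun ψ t).2)
    (isIndependentMod_comap hσ (atTop.comap e) ∅)
    (by rw [mk_singleton]; exact one_lt_aleph0.trans_le ((aleph0_le_mk I).trans hI.le))
  refine ⟨Ultrafilter.of F, ⟨fun n => σ ∅ ⁻¹' (e ⁻¹' Ici n), fun n => ?_, ?_⟩, fun f hfU hf => ?_⟩
  · exact Ultrafilter.of_le F (hF₀ (preimage_mem_comap (preimage_mem_comap (Ici_mem_atTop n))))
  · exact eq_empty_of_forall_notMem fun p hp =>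
      (e (σ ∅ p)).not_succ_le_self (mem_iInter.1 hp _)
  · obtain ⟨t, ht⟩ := invFun_surjective ψ.injective ⟨f, hf⟩
    rcases hres t with ⟨x, hx⟩ | href
    · simp only [ht] at hx
      simpa using inter_mem (hfU x) (Ultrafilter.of_le F hx)
    · simpa only [ht] using href.mono (Ultrafilter.of_le F)

end GoodUltrafilter

/-- For every infinite cardinal `κ` and every meet-semilattice `X`
with `|X| ≤ κ` there is a countably incomplete, `X`-good ultrafilter on `κ`. -/
theorem stmt_2 (κ : Cardinal.{u}) (hκ : Cardinal.aleph0 ≤ κ)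
    (X : Type u) [SemilatticeInf X] (hX : #X ≤ κ) :
    ∃ U : Ultrafilter κ.out,
      (∃ K : ℕ → Set κ.out, (∀ n : ℕ, K n ∈ U) ∧ ⋂ n : ℕ, K n = ∅) ∧
      (∀ f : X → Set κ.out, (∀ x : X, f x ∈ U) → Monotone f →
        ∃ g : X → Set κ.out,
          (∀ x : X, g x ∈ U) ∧
          (∀ x : X, g x ⊆ f x) ∧
          (∀ x y : X, g (x ⊓ y) = g x ∩ g y)) := by
  have : Infinite κ.out := infinite_iff.2 (hκ.trans_eq (mk_out κ).symm)
  exact GoodUltrafilter.exists_countablyIncomplete_good_ultrafilter κ.out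
    (hX.trans_eq (mk_out κ).symm)
end

section
/- For every infinite cardinal κ there exists a countably incomplete ultrafilter U on κ such that for every monotone map f from the meet-semilattice of cofinite subsets of κ (ordered by inclusion) into U, there exists a map g with g(x) ∈ U and g(x) ⊆ f(x) for every cofinite x ⊆ κ, and g(x ∩ y) = g(x) ∩ g(y) for all cofinite x, y ⊆ κ. -/
open Cardinal

universe u

namespace Stmt3Aux

open Set Filter

noncomputable section

variable {I : Type u} {Idx : Type u}

/-- Independence of the indexed family `fam` of functions relative to the
generators `𝒜`, using only indices in `av`. -/
def Ind (fam : Idx → I → Finset I) (𝒜 : Set (Set I)) (av : Set Idx) : Prop :=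
  ∀ T : Finset (Set I), ↑T ⊆ 𝒜 → ∀ P : Finset Idx, ↑P ⊆ av → ∀ v : Idx → Finset I,
    ∃ i : I, (∀ S ∈ T, i ∈ S) ∧ ∀ j ∈ P, fam j i = v j

/-- Engelking–Karłowicz: an independent family of functions `I → Finset I`
indexed by any type of cardinality at most `2 ^ #I`. -/
theorem exists_indep_fam (I : Type u) [Infinite I] (Idx : Type u) (hIdx : #Idx ≤ 2 ^ #I) :
    ∃ fam : Idx → I → Finset I, ∀ (P : Finset Idx) (v : Idx → Finset I),
      ∃ i, ∀ j ∈ P, fam j i = v j := by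
  classical
  -- the auxiliary domain
  let D : Type u := Σ s : Finset I, ((↥s → Prop) → Finset I)
  -- the canonical family on `D`, indexed by `Set I`
  let F : Set I → D → Finset I := fun A d => d.2 fun x => (x : I) ∈ A
  -- it is independent
  have hF : ∀ (P : Finset (Set I)) (v : Set I → Finset I), ∃ d : D, ∀ A ∈ P, F A d = v A := by
    intro P v
    have hsep : ∀ A B : Set I, A ≠ B → ∃ x : I, ¬(x ∈ A ↔ x ∈ B) := by
      intro A B h
      by_contra hc
      push_neg at hc
      exact h (Set.ext fun x => hc x)
    have : Nonempty I := inferInstance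
    let w : Set I × Set I → I := fun q =>
      if h : ∃ x : I, ¬(x ∈ q.1 ↔ x ∈ q.2) then h.choose else Classical.arbitrary I
    let s : Finset I := (P ×ˢ P).image w
    -- restrictions to `s` of distinct members of `P` are distinct
    have hkey : ∀ A ∈ P, ∀ B ∈ P, A ≠ B →
        (fun x : ↥s => (x : I) ∈ A) ≠ (fun x : ↥s => (x : I) ∈ B) := by
      intro A hA B hB hAB h
      have hex2 : ∃ x : I, ¬(x ∈ A ↔ x ∈ B) := hsep A B hAB
      have hw : w (A, B) ∈ s := by
        refine Finset.mem_image.mpr ⟨(A, B), ?_, rfl⟩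
        exact Finset.mem_product.mpr ⟨hA, hB⟩
      have hspec : ¬((w (A, B) ∈ A) ↔ (w (A, B) ∈ B)) := by
        simp only [w, dif_pos hex2]
        exact hex2.choose_spec
      exact hspec (iff_of_eq (congrFun h ⟨w (A, B), hw⟩))
    let vf : (↥s → Prop) → Finset I := fun χ =>
      if h : ∃ A ∈ P, (fun x : ↥s => (x : I) ∈ A) = χ then v h.choose else ∅
    refine ⟨⟨s, vf⟩, ?_⟩
    intro A hA
    have hex : ∃ B ∈ P, (fun x : ↥s => (x : I) ∈ B) =
        (fun x : ↥s => (x : I) ∈ A) := ⟨A, hA, rfl⟩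
    have hch := hex.choose_spec
    have hchA : hex.choose = A := by
      by_contra hne
      exact hkey _ hch.1 _ hA hne hch.2
    show vf _ = v A
    simp only [vf, dif_pos hex]
    rw [hchA]
  -- `D` has cardinality `#I`
  have hD : #D = #I := by
    have h1 : #D = Cardinal.sum fun s : Finset I => #((↥s → Prop) → Finset I) := mk_sigma _
    have h2 : ∀ s : Finset I, #((↥s → Prop) → Finset I) = #I := by
      intro s
      have ha : #((↥s → Prop) → Finset I) = #(Finset I) ^ #(↥s → Prop) := by
        rw [mk_arrow, Cardinal.lift_id, Cardinal.lift_id]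
      have hfin : #(↥s → Prop) < ℵ₀ := by
        have : Finite (↥s → Prop) := inferInstance
        exact lt_aleph0_of_finite _
      obtain ⟨n, hn⟩ := Cardinal.lt_aleph0.mp hfin
      have hn1 : 1 ≤ n := by
        rcases Nat.eq_zero_or_pos n with h0 | h
        · exfalso
          rw [h0, Nat.cast_zero, Cardinal.mk_eq_zero_iff] at hn
          exact hn.false (fun _ => True)
        · exact h
      rw [ha, hn]
      have : #(Finset I) = #I := mk_finset_of_infinite I
      rw [this]
      exact Cardinal.power_nat_eq (Cardinal.infinite_iff.mp inferInstance) hn1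
    calc #D = Cardinal.sum fun s : Finset I => #((↥s → Prop) → Finset I) := h1
      _ = Cardinal.sum fun _ : Finset I => #I := by
            congr 1; funext s; exact h2 s
      _ = #(Finset I) * #I := by rw [Cardinal.sum_const, Cardinal.lift_id, Cardinal.lift_id]
      _ = #I * #I := by rw [mk_finset_of_infinite]
      _ = #I := Cardinal.mul_eq_self (Cardinal.infinite_iff.mp inferInstance)
  -- transfer
  obtain ⟨eqv⟩ : Nonempty (D ≃ I) := Cardinal.eq.mp hD
  have hIdx' : #Idx ≤ #(Set I) := by rwa [mk_set]
  obtain ⟨emb⟩ : Nonempty (Idx ↪ Set I) := (Cardinal.le_def _ _).mp hIdx'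
  refine ⟨fun j i => F (emb j) (eqv.symm i), ?_⟩
  intro P v
  obtain ⟨d, hd⟩ := hF (P.image emb)
    (fun A => if h : ∃ j ∈ P, emb j = A then v h.choose else ∅)
  refine ⟨eqv d, ?_⟩
  intro j hj
  show F (emb j) (eqv.symm (eqv d)) = v j
  have h1 : emb j ∈ P.image emb := Finset.mem_image_of_mem _ hj
  have h2 := hd (emb j) h1
  rw [Equiv.symm_apply_apply, h2]
  have hex : ∃ j' ∈ P, emb j' = emb j := ⟨j, hj, rfl⟩
  rw [dif_pos hex]
  have := hex.choose_spec
  have : hex.choose = j := emb.injective this.2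
  rw [this]

/-- The tasks to be handled: deciding a subset of `I`, or finding a
multiplicative refinement of a monotone map. -/
abbrev Task (I : Type u) := Set I ⊕ ((Finset I) → Set I)

/-- The set where `fam j` takes the value `b`. -/
def ptset (fam : Idx → I → Finset I) (j : Idx) (b : Finset I) : Set I := {i | fam j i = b}

/-- The requirement on the family of generators `𝒜` for a given task. -/
def Handled (tk : Task I) (𝒜 : Set (Set I)) : Prop :=
  match tk with
  | .inl X => X ∈ 𝒜 ∨ Xᶜ ∈ 𝒜
  | .inr p => (∀ s t : Finset I, s ⊆ t → p t ⊆ p s) →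
      (∃ s, (p s)ᶜ ∈ 𝒜) ∨
      ∃ q : Finset I → Set I,
        (∀ s t u : Finset I, (u : Set I) = ↑s ∪ ↑t → q u = q s ∩ q t) ∧
        (∀ s, q s ⊆ p s) ∧ ∀ s, q s ∈ 𝒜

/-- Acceptability of a step outcome `DC` (new generators, newly consumed indices). -/
def Φ (fam : Idx → I → Finset I) (tk : Task I) (𝒜 : Set (Set I)) (used : Set Idx)
    (DC : Set (Set I) × Set Idx) : Prop :=
  DC.2.Finite ∧ Ind fam (𝒜 ∪ DC.1) (used ∪ DC.2)ᶜ ∧ Handled tk (𝒜 ∪ DC.1)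

/-- The key combinatorial step: when adding a set fails to preserve independence,
we may add its complement (consuming the finitely many functions in the failure
witness and freezing their values). -/
theorem failure_step {fam : Idx → I → Finset I} {𝒜 : Set (Set I)} {used : Set Idx}
    (hind : Ind fam 𝒜 usedᶜ) (T₀ : Finset (Set I)) (hT₀ : ↑T₀ ⊆ 𝒜) (X : Set I)
    (P : Finset Idx) (hP : ↑P ⊆ usedᶜ) (v : Idx → Finset I)
    (hno : ∀ i, (∀ S ∈ T₀, i ∈ S) → (∀ j ∈ P, fam j i = v j) → i ∉ X) :
    Ind fam (𝒜 ∪ ({Xᶜ} ∪ (fun j => ptset fam j (v j)) '' ↑P)) (used ∪ ↑P)ᶜ := by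
  classical
  intro T₁ hT₁ P₁ hP₁ v₁
  obtain ⟨i, hiT, hiv⟩ := hind (T₀ ∪ T₁.filter (· ∈ 𝒜))
    (by
      intro S hS
      rcases Finset.mem_union.mp (by exact_mod_cast hS) with h | h
      · exact hT₀ h
      · exact (Finset.mem_filter.mp h).2)
    (P ∪ P₁)
    (by
      intro j hj
      rcases Finset.mem_union.mp (by exact_mod_cast hj) with h | h
      · exact hP h
      · intro hu
        exact hP₁ h (Or.inl hu))
    (fun j => if j ∈ P then v j else v₁ j)
  have hvP : ∀ j ∈ P, fam j i = v j := by
    intro j hj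
    have := hiv j (Finset.mem_union_left _ hj)
    rwa [if_pos hj] at this
  have hT₀i : ∀ S ∈ T₀, i ∈ S := fun S hS => hiT S (Finset.mem_union_left _ hS)
  have hiX : i ∉ X := hno i hT₀i hvP
  refine ⟨i, ?_, ?_⟩
  · intro S hS
    rcases hT₁ hS with h | h
    · exact hiT S (Finset.mem_union_right _ (Finset.mem_filter.mpr ⟨hS, h⟩))
    · rcases h with h | h
      · rw [Set.mem_singleton_iff.mp h]; exact hiX
      · obtain ⟨j, hj, rfl⟩ := h
        exact hvP j (by exact_mod_cast hj)
  · intro j hj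
    have hjP : j ∉ P := by
      intro hc
      exact hP₁ hj (Or.inr (by exact_mod_cast hc))
    have := hiv j (Finset.mem_union_right _ hj)
    rwa [if_neg hjP] at this

/-- Every task admits an acceptable outcome, given independence and a fresh index. -/
theorem step_exists {fam : Idx → I → Finset I} {𝒜 : Set (Set I)} {used : Set Idx}
    (hind : Ind fam 𝒜 usedᶜ) (hfresh : ∃ j, j ∉ used) (tk : Task I) :
    ∃ DC : Set (Set I) × Set Idx, Φ fam tk 𝒜 used DC := by
  classical
  cases tk with
  | inl X =>
    by_cases h : Ind fam (𝒜 ∪ {X}) usedᶜ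
    · refine ⟨({X}, ∅), finite_empty, by simpa using h, Or.inl (Or.inr rfl)⟩
    · simp only [Ind] at h
      push_neg at h
      obtain ⟨T, hT, P, hP, v, hno⟩ := h
      refine ⟨({Xᶜ} ∪ (fun j => ptset fam j (v j)) '' ↑P, ↑P), P.finite_toSet, ?_, ?_⟩
      · refine failure_step hind (T.erase X) ?_ X P hP v ?_
        · intro S hS
          have hS' := Finset.mem_erase.mp (by exact_mod_cast hS)
          rcases hT (by exact_mod_cast hS'.2) with h | h
          · exact h
          · exact absurd h hS'.1
        · intro i h1 h2 hiX
          have hTall : ∀ S ∈ T, i ∈ S := by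
            intro S hS
            by_cases hSX : S = X
            · rw [hSX]; exact hiX
            · exact h1 S (Finset.mem_erase.mpr ⟨hSX, hS⟩)
          obtain ⟨j, hj, hne⟩ := hno i hTall
          exact hne (h2 j hj)
      · exact Or.inr (Or.inr (Or.inl rfl))
  | inr p =>
    by_cases hanti : ∀ s t : Finset I, s ⊆ t → p t ⊆ p s
    · by_cases h : Ind fam (𝒜 ∪ Set.range p) usedᶜ
      · -- main case: build the multiplicative refinement
        obtain ⟨j₀, hj₀⟩ := hfresh
        set q : Finset I → Set I := fun s => {i | s ⊆ fam j₀ i ∧ i ∈ p (fam j₀ i)} with hq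
        refine ⟨(Set.range q, {j₀}), Set.finite_singleton _, ?_, ?_⟩
        · -- independence is preserved
          intro T₁ hT₁ P₁ hP₁ v₁
          set pick : Set I → Finset I := fun S =>
            if h : S ∈ Set.range q then h.choose else ∅ with hpick
          set sstar : Finset I := T₁.sup pick with hsstar
          obtain ⟨i, hiT, hiv⟩ := h (T₁.filter (· ∈ 𝒜) ∪ {p sstar})
            (by
              intro S hS
              rcases Finset.mem_union.mp (by exact_mod_cast hS) with h' | h'
              · exact Or.inl (Finset.mem_filter.mp h').2
              · exact Or.inr ⟨sstar, (Finset.mem_singleton.mp h').symm⟩)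
            (insert j₀ P₁)
            (by
              intro j hj
              rcases Finset.mem_insert.mp (by exact_mod_cast hj) with h' | h'
              · rw [h']; exact hj₀
              · intro hu
                exact hP₁ h' (Or.inl hu))
            (Function.update v₁ j₀ sstar)
          have hfj₀ : fam j₀ i = sstar := by
            have := hiv j₀ (Finset.mem_insert_self _ _)
            rwa [Function.update_self] at this
          have hips : i ∈ p sstar :=
            hiT (p sstar) (Finset.mem_union_right _ (Finset.mem_singleton_self _))
          refine ⟨i, ?_, ?_⟩
          · intro S hS
            rcases hT₁ hS with h' | h'
            · exact hiT S (Finset.mem_union_left _ (Finset.mem_filter.mpr ⟨hS, h'⟩))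
            · replace h' : S ∈ Set.range q := h'
              have hps : pick S = h'.choose := by
                simp only [hpick]
                exact dif_pos h'
              have hqp : q (pick S) = S := by
                rw [hps]; exact h'.choose_spec
              have hsub : pick S ⊆ sstar := Finset.le_sup hS
              rw [← hqp]
              exact ⟨by rw [hfj₀]; exact hsub, by rw [hfj₀]; exact hips⟩
          · intro j hj
            have hjne : j ≠ j₀ := by
              intro hc
              exact hP₁ hj (Or.inr (by rw [hc]; rfl))
            have := hiv j (Finset.mem_insert_of_mem hj)
            rwa [Function.update_of_ne hjne] at this
        · -- handledness
          refine fun _ => Or.inr ⟨q, ?_, ?_, fun s => Or.inr ⟨s, rfl⟩⟩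
          · intro s t u hu
            ext i
            simp only [hq, Set.mem_setOf_eq, Set.mem_inter_iff]
            constructor
            · intro ⟨h1, h2⟩
              have h1' : (u : Set I) ⊆ ↑(fam j₀ i) := by exact_mod_cast h1
              rw [hu, Set.union_subset_iff] at h1'
              exact ⟨⟨by exact_mod_cast h1'.1, h2⟩, ⟨by exact_mod_cast h1'.2, h2⟩⟩
            · intro ⟨⟨h1, h2⟩, ⟨h3, _⟩⟩
              refine ⟨?_, h2⟩
              rw [← Finset.coe_subset, hu, Set.union_subset_iff]
              exact ⟨by exact_mod_cast h1, by exact_mod_cast h3⟩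
          · intro s i hi
            exact hanti s (fam j₀ i) hi.1 hi.2
      · -- failure case: some `(p s)ᶜ` can be added
        simp only [Ind] at h
        push_neg at h
        obtain ⟨T, hT, P, hP, v, hno⟩ := h
        set pick : Set I → Finset I := fun S =>
          if h : S ∈ Set.range p then h.choose else ∅ with hpick
        set sstar : Finset I := T.sup pick with hsstar
        refine ⟨({(p sstar)ᶜ} ∪ (fun j => ptset fam j (v j)) '' ↑P, ↑P),
          P.finite_toSet, ?_, fun _ => Or.inl ⟨sstar, Or.inr (Or.inl rfl)⟩⟩
        refine failure_step hind (T.filter (· ∈ 𝒜)) ?_ (p sstar) P hP v ?_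
        · intro S hS
          exact (Finset.mem_filter.mp (by exact_mod_cast hS)).2
        · intro i h1 h2 hips
          have hTall : ∀ S ∈ T, i ∈ S := by
            intro S hS
            rcases hT (by exact_mod_cast hS) with h' | h'
            · exact h1 S (Finset.mem_filter.mpr ⟨hS, h'⟩)
            · have hps : pick S = h'.choose := by
                simp only [hpick]
                exact dif_pos h'
              have hqp : p (pick S) = S := by
                rw [hps]; exact h'.choose_spec
              have hsub : pick S ⊆ sstar := Finset.le_sup hS
              rw [← hqp]
              exact hanti _ _ hsub hips
          obtain ⟨j, hj, hne⟩ := hno i hTall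
          exact hne (h2 j hj)
    · exact ⟨(∅, ∅), finite_empty, by simpa using hind, fun h => absurd h hanti⟩

section Construction

variable {Tt : Type u} [LinearOrder Tt] [WellFoundedLT Tt]
variable (fam : Idx → I → Finset I) (none0 : Idx) (e : Tt ≃ Task I)

/-- The initial generators, witnessing countable incompleteness. -/
def base : Set (Set I) := Set.range fun n : ℕ => {i : I | n ≤ (fam none0 i).card}

open scoped Classical in
/-- One step of the construction. -/
def stepCore (tk : Task I) (𝒜 : Set (Set I)) (used : Set Idx) : Set (Set I) × Set Idx :=
  if h : ∃ DC, Φ fam tk 𝒜 used DC then h.choose else (∅, ∅)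

/-- The transfinite recursion: at each stage, the new generators and the
newly consumed indices. -/
def R : Tt → Set (Set I) × Set Idx :=
  (wellFounded_lt (α := Tt)).fix fun t rec =>
    stepCore fam (e t)
      (base fam none0 ∪ ⋃ s, ⋃ h : s < t, (rec s h).1)
      ({none0} ∪ ⋃ s, ⋃ h : s < t, (rec s h).2)

/-- Generators accumulated before stage `t`. -/
def At (t : Tt) : Set (Set I) :=
  base fam none0 ∪ ⋃ s, ⋃ _ : s < t, (R fam none0 e s).1

/-- Indices consumed before stage `t`. -/
def Ut (t : Tt) : Set Idx :=
  {none0} ∪ ⋃ s, ⋃ _ : s < t, (R fam none0 e s).2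

theorem R_eq (t : Tt) :
    R fam none0 e t = stepCore fam (e t) (At fam none0 e t) (Ut fam none0 e t) :=
  WellFounded.fix_eq _ _ t

theorem R2_finite (t : Tt) : (R fam none0 e t).2.Finite := by
  rw [R_eq]
  unfold stepCore
  split_ifs with h
  · exact h.choose_spec.1
  · exact finite_empty

theorem At_mono {s t : Tt} (h : s ≤ t) : At fam none0 e s ⊆ At fam none0 e t := by
  refine Set.union_subset_union_right _ ?_
  refine Set.iUnion_subset fun x => Set.iUnion_subset fun hx => ?_
  exact Set.subset_iUnion_of_subset x (Set.subset_iUnion_of_subset (lt_of_lt_of_le hx h)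
    (subset_refl _))

theorem R1_sub {s t : Tt} (h : s < t) : (R fam none0 e s).1 ⊆ At fam none0 e t := by
  refine Set.subset_union_of_subset_right ?_ _
  exact Set.subset_iUnion_of_subset s (Set.subset_iUnion_of_subset h (subset_refl _))

theorem Ut_mono {s t : Tt} (h : s ≤ t) : Ut fam none0 e s ⊆ Ut fam none0 e t := by
  refine Set.union_subset_union_right _ ?_
  refine Set.iUnion_subset fun x => Set.iUnion_subset fun hx => ?_
  exact Set.subset_iUnion_of_subset x (Set.subset_iUnion_of_subset (lt_of_lt_of_le hx h)
    (subset_refl _))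

theorem R2_sub {s t : Tt} (h : s < t) : (R fam none0 e s).2 ⊆ Ut fam none0 e t := by
  refine Set.subset_union_of_subset_right ?_ _
  exact Set.subset_iUnion_of_subset s (Set.subset_iUnion_of_subset h (subset_refl _))

/-- Any finite set of generators accumulated before stage `t` either consists of
base generators or is covered at some earlier stage. -/
theorem stage_cover (T : Finset (Set I)) (t : Tt) (hT : ↑T ⊆ At fam none0 e t) :
    (↑T ⊆ base fam none0 (I := I)) ∨
      ∃ s, s < t ∧ ↑T ⊆ At fam none0 e s ∪ (R fam none0 e s).1 := by
  classical
  by_cases hbase : ∀ S ∈ T, S ∈ base fam none0 (I := I)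
  · exact Or.inl fun S hS => hbase S (by exact_mod_cast hS)
  · right
    have key : ∀ S ∈ T, S ∉ base fam none0 (I := I) → ∃ s, s < t ∧ S ∈ (R fam none0 e s).1 := by
      intro S hS hnb
      rcases hT (by exact_mod_cast hS) with h | h
      · exact absurd h hnb
      · simpa using h
    set u : Set I → Tt := fun S =>
      if h : ∃ s, s < t ∧ S ∈ (R fam none0 e s).1 then h.choose else t with hu
    set W : Finset Tt := (T.filter fun S => S ∉ base fam none0 (I := I)).image u with hW
    have hWne : W.Nonempty := by
      push_neg at hbase
      obtain ⟨S, hS, hnb⟩ := hbase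
      exact ⟨u S, Finset.mem_image_of_mem u (Finset.mem_filter.mpr ⟨hS, hnb⟩)⟩
    set s₀ : Tt := W.max' hWne with hs₀
    have huS : ∀ S ∈ T, S ∉ base fam none0 (I := I) →
        u S < t ∧ S ∈ (R fam none0 e (u S)).1 := by
      intro S hS hnb
      have hex := key S hS hnb
      have : u S = hex.choose := by simp only [hu]; exact dif_pos hex
      rw [this]
      exact hex.choose_spec
    have hs₀t : s₀ < t := by
      obtain ⟨S, hSW, hSu⟩ := Finset.mem_image.mp (W.max'_mem hWne)
      have := huS S (Finset.mem_filter.mp hSW).1 (Finset.mem_filter.mp hSW).2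
      rw [hSu] at this
      exact this.1
    refine ⟨s₀, hs₀t, ?_⟩
    intro S hS
    by_cases hnb : S ∈ base fam none0 (I := I)
    · exact Or.inl (Or.inl hnb)
    · have hS' : S ∈ T := by exact_mod_cast hS
      have h1 := huS S hS' hnb
      have hle : u S ≤ s₀ :=
        W.le_max' _ (Finset.mem_image_of_mem u (Finset.mem_filter.mpr ⟨hS', hnb⟩))
      rcases lt_or_eq_of_le hle with hlt | heq
      · exact Or.inl (R1_sub fam none0 e hlt h1.2)
      · rw [heq] at h1
        exact Or.inr h1.2

variable (hfam : ∀ (P : Finset Idx) (v : Idx → Finset I), ∃ i, ∀ j ∈ P, fam j i = v j)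

include hfam in
/-- The base generators are independent. -/
theorem base_ind [Infinite I] :
    Ind fam (base fam none0 (I := I)) ({none0}ᶜ : Set Idx) := by
  classical
  intro T hT P hP v
  set nf : Set I → ℕ := fun S =>
    if h : ∃ n : ℕ, S = {i : I | n ≤ (fam none0 i).card} then h.choose else 0 with hnf
  set N : ℕ := T.sup nf with hN
  obtain ⟨b, hb⟩ := Infinite.exists_subset_card_eq I N
  obtain ⟨i, hi⟩ := hfam (insert none0 P) (Function.update v none0 b)
  have hib : fam none0 i = b := by
    have := hi none0 (Finset.mem_insert_self _ _)
    rwa [Function.update_self] at this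
  refine ⟨i, ?_, ?_⟩
  · intro S hS
    obtain ⟨n, hn⟩ := hT hS
    have hex : ∃ n : ℕ, S = {i : I | n ≤ (fam none0 i).card} := ⟨n, hn.symm⟩
    have h1 : nf S = hex.choose := by simp only [hnf]; exact dif_pos hex
    have h2 : S = {i : I | nf S ≤ (fam none0 i).card} := by rw [h1]; exact hex.choose_spec
    rw [h2]
    have : nf S ≤ N := Finset.le_sup (by exact_mod_cast hS)
    simp only [Set.mem_setOf_eq, hib, hb]
    exact this
  · intro j hj
    have hjne : j ≠ none0 := by
      intro hc
      exact hP hj (by rw [hc]; rfl)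
    have := hi j (Finset.mem_insert_of_mem hj)
    rwa [Function.update_of_ne hjne] at this

variable (hIio : ∀ t : Tt, #(Set.Iio t) < #Idx) (hbig : ℵ₀ < #Idx)

include hIio hbig in
/-- At every stage there is an unconsumed index. -/
theorem fresh (t : Tt) : ∃ j, j ∉ Ut fam none0 e t := by
  by_contra hcon
  push_neg at hcon
  have huniv : Ut fam none0 e t = Set.univ := Set.eq_univ_of_forall hcon
  have hle : #(Ut fam none0 e t) ≤ 1 + #(Set.Iio t) * ℵ₀ := by
    refine le_trans (Cardinal.mk_union_le _ _) ?_
    refine add_le_add (by simpa using le_refl (1 : Cardinal)) ?_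
    refine le_trans (Cardinal.mk_biUnion_le (fun s => (R fam none0 e s).2) (Set.Iio t)) ?_
    refine mul_le_mul' le_rfl ?_
    rcases isEmpty_or_nonempty (Set.Iio t) with hE | hN
    · rw [ciSup_of_empty]
      exact bot_le
    · exact ciSup_le' fun x => (R2_finite fam none0 e x.1).lt_aleph0.le
  rw [huniv, Cardinal.mk_univ] at hle
  have hlt : 1 + #(Set.Iio t) * ℵ₀ < #Idx := by
    refine Cardinal.add_lt_of_lt hbig.le ?_ ?_
    · exact lt_trans Cardinal.one_lt_aleph0 hbig
    · exact Cardinal.mul_lt_of_lt hbig.le (hIio t) hbig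
  exact absurd (lt_of_le_of_lt hle hlt) (lt_irrefl _)

include hfam hIio hbig in
/-- The main invariant: independence holds at every stage. -/
theorem inv [Infinite I] : ∀ t : Tt, Ind fam (At fam none0 e t) (Ut fam none0 e t)ᶜ := by
  intro t
  induction t using (wellFounded_lt (α := Tt)).induction with
  | _ t ih =>
    have hphi : ∀ s, s < t → Φ fam (e s) (At fam none0 e s) (Ut fam none0 e s)
        (R fam none0 e s) := by
      intro s hs
      have hex := step_exists (ih s hs) (fresh fam none0 e hIio hbig s) (e s)
      rw [R_eq]
      unfold stepCore
      rw [dif_pos hex]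
      exact hex.choose_spec
    intro T hT P hP v
    rcases stage_cover fam none0 e T t hT with hb | ⟨s, hst, hcov⟩
    · refine base_ind fam none0 hfam T hb P ?_ v
      intro j hj hc
      exact hP hj (Or.inl hc)
    · refine (hphi s hst).2.1 T hcov P ?_ v
      intro j hj hc
      exact hP hj (Set.union_subset (Ut_mono fam none0 e hst.le) (R2_sub fam none0 e hst) hc)

include hfam hIio hbig in
/-- Every stage's outcome is acceptable. -/
theorem phi [Infinite I] (t : Tt) :
    Φ fam (e t) (At fam none0 e t) (Ut fam none0 e t) (R fam none0 e t) := by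
  have hex := step_exists (inv fam none0 e hfam hIio hbig t)
    (fresh fam none0 e hIio hbig t) (e t)
  rw [R_eq]
  unfold stepCore
  rw [dif_pos hex]
  exact hex.choose_spec

end Construction

/-- Main theorem: any infinite set carries a countably incomplete ultrafilter which is
good for the meet-semilattice of cofinite sets. -/
theorem main (I : Type u) [Infinite I] :
    ∃ U : Ultrafilter I,
      (∃ K : ℕ → Set I, (∀ n : ℕ, K n ∈ U) ∧ ⋂ n : ℕ, K n = ∅) ∧
      (∀ f : Set I → Set I,
        (∀ x : Set I, xᶜ.Finite → f x ∈ U) →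
        (∀ x y : Set I, xᶜ.Finite → yᶜ.Finite → x ⊆ y → f x ⊆ f y) →
        ∃ g : Set I → Set I,
          (∀ x : Set I, xᶜ.Finite → g x ∈ U ∧ g x ⊆ f x) ∧
          (∀ x y : Set I, xᶜ.Finite → yᶜ.Finite → g (x ∩ y) = g x ∩ g y)) := by
  classical
  have hκ : ℵ₀ ≤ #I := Cardinal.infinite_iff.mp inferInstance
  set c : Cardinal.{u} := 2 ^ #I with hc
  have hℵc : ℵ₀ ≤ c := hκ.trans (Cardinal.cantor _).le
  let Tt : Type u := c.ord.ToType
  have hTt : #Tt = c := Cardinal.mk_ord_toType c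
  have hNeTt : Nonempty Tt := by
    rw [← Cardinal.mk_ne_zero_iff (α := Tt), hTt]
    exact ne_of_gt (lt_of_lt_of_le Cardinal.aleph0_pos hℵc)
  have htask : #(Task I) = c := by
    have h1 : #(Task I) = #(Set I) + #(Finset I → Set I) := by
      rw [show Task I = (Set I ⊕ (Finset I → Set I)) from rfl, Cardinal.mk_sum,
        Cardinal.lift_id, Cardinal.lift_id]
    have h2 : #(Finset I → Set I) = c := by
      rw [Cardinal.mk_arrow, Cardinal.lift_id, Cardinal.lift_id, Cardinal.mk_set,
        Cardinal.mk_finset_of_infinite, hc, ← Cardinal.power_mul, Cardinal.mul_eq_self hκ]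
    rw [h1, h2, Cardinal.mk_set, ← hc, Cardinal.add_eq_self hℵc]
  obtain ⟨e⟩ : Nonempty (Tt ≃ Task I) := Cardinal.eq.mp (hTt.trans htask.symm)
  let Idx : Type u := Option (Tt × ULift.{u} ℕ)
  have hIdx : #Idx = c := by
    have h1 : #Idx = #Tt * #(ULift.{u} ℕ) + 1 := by
      rw [show Idx = Option (Tt × ULift.{u} ℕ) from rfl, Cardinal.mk_option, Cardinal.mk_prod,
        Cardinal.lift_id, Cardinal.lift_id]
    have h2 : #(ULift.{u} ℕ) = ℵ₀ := by
      rw [Cardinal.mk_uLift, Cardinal.mk_nat, Cardinal.lift_aleph0]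
    rw [h1, h2, hTt, Cardinal.mul_eq_max hℵc le_rfl, max_eq_left hℵc,
      Cardinal.add_one_eq hℵc]
  have hIdxle : #Idx ≤ 2 ^ #I := le_of_eq (by rw [hIdx, hc])
  obtain ⟨fam, hfam⟩ := exists_indep_fam I Idx hIdxle
  have hIio : ∀ t : Tt, #(Set.Iio t) < #Idx := fun t => by
    rw [hIdx]; exact Cardinal.mk_Iio_ord_toType t
  have hbig : ℵ₀ < #Idx := by rw [hIdx]; exact hκ.trans_lt (Cardinal.cantor _)
  let n0 : Idx := none
  set 𝒜 : Set (Set I) := base fam n0 ∪ ⋃ t, (R fam n0 e t).1 with h𝒜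
  have hsub : ∀ t : Tt, At fam n0 e t ∪ (R fam n0 e t).1 ⊆ 𝒜 := by
    intro t
    refine Set.union_subset ?_ ?_
    · refine Set.union_subset Set.subset_union_left ?_
      refine Set.iUnion_subset fun s => Set.iUnion_subset fun _ => ?_
      exact Set.subset_union_of_subset_right
        (Set.subset_iUnion (fun t' => (R fam n0 e t').1) s) _
    · exact Set.subset_union_of_subset_right
        (Set.subset_iUnion (fun t' => (R fam n0 e t').1) t) _
  -- finite intersection property (in the strong form)
  have hFIP : ∀ T : Finset (Set I), ↑T ⊆ 𝒜 → ∃ i, ∀ S ∈ T, i ∈ S := by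
    intro T hT
    have hcover : ∃ s₀ : Tt, ↑T ⊆ At fam n0 e s₀ ∪ (R fam n0 e s₀).1 := by
      set u : Set I → Tt := fun S =>
        if h : ∃ s, S ∈ (R fam n0 e s).1 then h.choose else hNeTt.some with hu
      have huS : ∀ S, (∃ s, S ∈ (R fam n0 e s).1) → S ∈ (R fam n0 e (u S)).1 := by
        intro S hex
        have : u S = hex.choose := by simp only [hu]; exact dif_pos hex
        rw [this]
        exact hex.choose_spec
      set W : Finset Tt := (T.filter fun S => S ∉ base fam n0 (I := I)).image u with hW
      by_cases hWne : W.Nonempty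
      · refine ⟨W.max' hWne, ?_⟩
        intro S hS
        by_cases hb : S ∈ base fam n0 (I := I)
        · exact Or.inl (Or.inl hb)
        · have hS' : S ∈ T := by exact_mod_cast hS
          have hex : ∃ s, S ∈ (R fam n0 e s).1 := by
            rcases hT hS with h | h
            · exact absurd h hb
            · simpa using h
          have hle : u S ≤ W.max' hWne :=
            W.le_max' _ (Finset.mem_image_of_mem u (Finset.mem_filter.mpr ⟨hS', hb⟩))
          rcases lt_or_eq_of_le hle with hlt | heq
          · exact Or.inl (R1_sub fam n0 e hlt (huS S hex))
          · rw [← heq]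
            exact Or.inr (huS S hex)
      · refine ⟨hNeTt.some, ?_⟩
        intro S hS
        by_cases hb : S ∈ base fam n0 (I := I)
        · exact Or.inl (Or.inl hb)
        · exfalso
          exact hWne ⟨u S, Finset.mem_image_of_mem u
            (Finset.mem_filter.mpr ⟨by exact_mod_cast hS, hb⟩)⟩
    obtain ⟨s₀, hcov⟩ := hcover
    obtain ⟨i, hi, -⟩ := (phi fam n0 e hfam hIio hbig s₀).2.1 T hcov ∅ (by simp)
      (fun _ => ∅)
    exact ⟨i, hi⟩
  set F : Filter I := Filter.generate 𝒜 with hF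
  have hmemF : ∀ X ∈ 𝒜, X ∈ F := fun X hX => Filter.mem_generate_of_mem hX
  have hdec : ∀ X : Set I, X ∈ 𝒜 ∨ Xᶜ ∈ 𝒜 := by
    intro X
    have hH := (phi fam n0 e hfam hIio hbig (e.symm (Sum.inl X))).2.2
    rw [Equiv.apply_symm_apply] at hH
    rcases (hH : X ∈ _ ∨ Xᶜ ∈ _) with h | h
    exacts [Or.inl (hsub _ h), Or.inr (hsub _ h)]
  have hcompl : ∀ s : Set I, sᶜ ∉ F ↔ s ∈ F := by
    intro s
    constructor
    · intro h
      rcases hdec s with h' | h'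
      · exact hmemF _ h'
      · exact absurd (hmemF _ h') h
    · intro hs hsc
      rw [hF, Filter.mem_generate_iff] at hs hsc
      obtain ⟨t₁, ht₁, hfin₁, hsub₁⟩ := hs
      obtain ⟨t₂, ht₂, hfin₂, hsub₂⟩ := hsc
      obtain ⟨i, hi⟩ := hFIP (hfin₁.toFinset ∪ hfin₂.toFinset) (by
        intro S hS
        rcases Finset.mem_union.mp (by exact_mod_cast hS) with h | h
        · exact ht₁ (hfin₁.mem_toFinset.mp h)
        · exact ht₂ (hfin₂.mem_toFinset.mp h))
      have hi₁ : i ∈ s := hsub₁ (Set.mem_sInter.mpr fun S hS =>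
        hi S (Finset.mem_union_left _ (hfin₁.mem_toFinset.mpr hS)))
      have hi₂ : i ∈ sᶜ := hsub₂ (Set.mem_sInter.mpr fun S hS =>
        hi S (Finset.mem_union_right _ (hfin₂.mem_toFinset.mpr hS)))
      exact hi₂ hi₁
  refine ⟨Ultrafilter.ofComplNotMemIff F hcompl, ⟨fun n => {i | n ≤ (fam n0 i).card}, ?_, ?_⟩, ?_⟩
  · intro n
    exact hmemF _ (Or.inl ⟨n, rfl⟩)
  · ext i
    simp only [Set.mem_iInter, Set.mem_setOf_eq, Set.mem_empty_iff_false, iff_false]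
    intro hall
    have := hall ((fam n0 i).card + 1)
    omega
  · intro f hf1 hf2
    set p : Finset I → Set I := fun s => f ((↑s)ᶜ) with hp
    have hanti : ∀ s t : Finset I, s ⊆ t → p t ⊆ p s := by
      intro s t hst
      refine hf2 _ _ ?_ ?_ ?_
      · rw [compl_compl]; exact t.finite_toSet
      · rw [compl_compl]; exact s.finite_toSet
      · exact compl_subset_compl.mpr (by exact_mod_cast hst)
    have hH := (phi fam n0 e hfam hIio hbig (e.symm (Sum.inr p))).2.2
    rw [Equiv.apply_symm_apply] at hH
    rcases (hH : Handled (Sum.inr p) _) hanti with ⟨s, hs⟩ | ⟨q, hmul, hqsub, hqmem⟩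
    · exfalso
      have h1 : p s ∈ F := hf1 _ (by rw [compl_compl]; exact s.finite_toSet)
      have h2 : (p s)ᶜ ∈ F := hmemF _ (hsub _ hs)
      exact (hcompl (p s)).mpr h1 h2
    · have hpeq : ∀ (x : Set I) (hx : xᶜ.Finite), p hx.toFinset = f x := by
        intro x hx
        simp only [hp]
        rw [Set.Finite.coe_toFinset, compl_compl]
      refine ⟨fun x => if h : xᶜ.Finite then q h.toFinset else ∅, ?_, ?_⟩
      · intro x hx
        have hgx : (fun x => if h : xᶜ.Finite then q h.toFinset else ∅) x
            = q hx.toFinset := dif_pos hx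
        rw [hgx]
        constructor
        · exact hmemF _ (hsub _ (hqmem _))
        · exact (hpeq x hx) ▸ (hqsub hx.toFinset)
      · intro x y hx hy
        have hxy : (x ∩ y)ᶜ.Finite := by rw [Set.compl_inter]; exact hx.union hy
        have h1 : (fun x => if h : xᶜ.Finite then q h.toFinset else ∅) (x ∩ y)
            = q hxy.toFinset := dif_pos hxy
        have h2 : (fun x => if h : xᶜ.Finite then q h.toFinset else ∅) x
            = q hx.toFinset := dif_pos hx
        have h3 : (fun x => if h : xᶜ.Finite then q h.toFinset else ∅) y
            = q hy.toFinset := dif_pos hy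
        rw [h1, h2, h3]
        refine hmul hx.toFinset hy.toFinset hxy.toFinset ?_
        rw [Set.Finite.coe_toFinset, Set.Finite.coe_toFinset, Set.Finite.coe_toFinset,
          Set.compl_inter]

end
end Stmt3Aux

open Cardinal

/-- For every infinite cardinal `κ` there is a countably incomplete
ultrafilter `U` on `κ` which is good for the meet-semilattice of cofinite subsets
of `κ`: every monotone map from the cofinite subsets of `κ` into `U` dominates a
multiplicative map into `U`. -/
theorem stmt_3 (κ : Cardinal.{u}) (hκ : Cardinal.aleph0 ≤ κ) :
    ∃ U : Ultrafilter κ.out,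
      (∃ K : ℕ → Set κ.out, (∀ n : ℕ, K n ∈ U) ∧ ⋂ n : ℕ, K n = ∅) ∧
      (∀ f : Set κ.out → Set κ.out,
        (∀ x : Set κ.out, xᶜ.Finite → f x ∈ U) →
        (∀ x y : Set κ.out, xᶜ.Finite → yᶜ.Finite → x ⊆ y → f x ⊆ f y) →
        ∃ g : Set κ.out → Set κ.out,
          (∀ x : Set κ.out, xᶜ.Finite → g x ∈ U ∧ g x ⊆ f x) ∧
          (∀ x y : Set κ.out, xᶜ.Finite → yᶜ.Finite → g (x ∩ y) = g x ∩ g y)) := by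
  have : Infinite κ.out := Cardinal.infinite_iff.mpr (by rw [Cardinal.mk_out]; exact hκ)
  exact Stmt3Aux.main κ.out
end

section
/- Let U be a countably incomplete ultrafilter on a set I, X any set, and p a possibility function for U over X. Then there exists a possibility function q for U over X such that q(Θ) ⊆ p(Θ) for every finite Θ ⊆ X, and q is locally finite: for every i ∈ I there is n ∈ ℕ such that every finite Θ ⊆ X with i ∈ q(Θ) satisfies |Θ| ≤ n. -/
/-- If `U` is a countably incomplete ultrafilter on `I` and `p` is a
possibility function for `U` over `X` (a map from finite subsets of `X` into `U`
which is antitone), then there is a locally finite possibility function `q ≤ p`. -/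
theorem stmt_4 {I : Type*} {X : Type*} (U : Ultrafilter I)
    (hinc : ∃ K : ℕ → Set I, (∀ n : ℕ, K n ∈ U) ∧ ⋂ n : ℕ, K n = ∅)
    (p : Finset X → Set I)
    (hpU : ∀ Θ : Finset X, p Θ ∈ U)
    (hpanti : ∀ Θ Θ' : Finset X, Θ ⊆ Θ' → p Θ' ⊆ p Θ) :
    ∃ q : Finset X → Set I,
      (∀ Θ : Finset X, q Θ ∈ U) ∧
      (∀ Θ Θ' : Finset X, Θ ⊆ Θ' → q Θ' ⊆ q Θ) ∧
      (∀ Θ : Finset X, q Θ ⊆ p Θ) ∧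
      (∀ i : I, ∃ n : ℕ, ∀ Θ : Finset X, i ∈ q Θ → Θ.card ≤ n) := by
  obtain ⟨K, hKU, hKempty⟩ := hinc
  set K' : ℕ → Set I := fun n => ⋂ m ∈ Finset.range (n+1), K m with hK'
  have hK'U : ∀ n, K' n ∈ U := by
    intro n
    exact (Filter.biInter_finset_mem _).2 fun m _ => hKU m
  have hK'anti : ∀ m n, m ≤ n → K' n ⊆ K' m := by
    intro m n hmn i hi
    simp only [hK', Set.mem_iInter, Finset.mem_range] at hi ⊢
    intro k hk
    exact hi k (lt_of_lt_of_le hk (by omega))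
  refine ⟨fun Θ => p Θ ∩ K' Θ.card, fun Θ => (U.inter_mem (hpU Θ) (hK'U _)),
    ?_, fun Θ => Set.inter_subset_left, ?_⟩
  · intro Θ Θ' h i hi
    exact ⟨hpanti Θ Θ' h hi.1, hK'anti _ _ (Finset.card_le_card h) hi.2⟩
  · intro i
    have : i ∉ ⋂ n, K n := by rw [hKempty]; exact Set.notMem_empty i
    rw [Set.mem_iInter] at this
    push_neg at this
    obtain ⟨n, hn⟩ := this
    refine ⟨n, fun Θ hΘ => ?_⟩
    by_contra h
    push_neg at h
    have : i ∈ K n := by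
      have := hΘ.2
      simp only [hK', Set.mem_iInter, Finset.mem_range] at this
      exact this n (by omega)
    exact hn this
end

section
/- Let U be an ultrafilter on a set I, X a set, and q a possibility function for U over X with q(∅) = I. Suppose q is consistent, i.e., q(Θ) ∩ q(Θ') ⊆ q(Θ ∪ Θ') for all finite Θ, Θ' ⊆ X, and locally finite, i.e., for every i ∈ I there is n ∈ ℕ such that every finite Θ ⊆ X with i ∈ q(Θ) satisfies |Θ| ≤ n. Then q has an actualization: there is a family (Φ_i)_{i∈I} of finite subsets of X such that i ∈ q(Φ_i) for every i ∈ I, and for every θ ∈ X the set {i ∈ I : θ ∈ Φ_i} belongs to U. -/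
/-- A consistent, locally finite possibility function `q` for an
ultrafilter `U` over a set `X` with `q ∅ = I` has an actualization: a family
`(Φ i)_{i ∈ I}` of finite subsets of `X` with `i ∈ q (Φ i)` for all `i`, such
that for each `θ ∈ X` the set `{i : θ ∈ Φ i}` belongs to `U`. -/
theorem stmt_5 {I : Type*} {X : Type*} [DecidableEq X] (U : Ultrafilter I)
    (q : Finset X → Set I)
    (hqU : ∀ Θ : Finset X, q Θ ∈ U)
    (hqanti : ∀ Θ Θ' : Finset X, Θ ⊆ Θ' → q Θ' ⊆ q Θ)
    (hqempty : q ∅ = Set.univ)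
    (hqcon : ∀ Θ Θ' : Finset X, q Θ ∩ q Θ' ⊆ q (Θ ∪ Θ'))
    (hqlf : ∀ i : I, ∃ n : ℕ, ∀ Θ : Finset X, i ∈ q Θ → Θ.card ≤ n) :
    ∃ Φ : I → Finset X,
      (∀ i : I, i ∈ q (Φ i)) ∧
      (∀ θ : X, {i : I | θ ∈ Φ i} ∈ U) := by
  classical
  have key : ∀ i : I, ∃ Φi : Finset X, i ∈ q Φi ∧
      ∀ Θ : Finset X, i ∈ q Θ → Θ.card ≤ Φi.card := by
    intro i
    obtain ⟨n, hn⟩ := hqlf i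
    set P : ℕ → Prop := fun k => ∃ Θ : Finset X, i ∈ q Θ ∧ Θ.card = k with hP
    have hP0 : P 0 := ⟨∅, by simp [hqempty], by simp⟩
    have hspec : P (Nat.findGreatest P n) :=
      Nat.findGreatest_spec (Nat.zero_le n) hP0
    obtain ⟨Θ₀, hΘ₀, hcard⟩ := hspec
    refine ⟨Θ₀, hΘ₀, fun Θ hΘ => ?_⟩
    rw [hcard]
    exact Nat.le_findGreatest (hn Θ hΘ) ⟨Θ, hΘ, rfl⟩
  choose Φ hΦ hmax using key
  refine ⟨Φ, hΦ, fun θ => ?_⟩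
  refine U.sets_of_superset (hqU {θ}) ?_
  intro i hi
  have h1 : i ∈ q (Φ i ∪ {θ}) := hqcon _ _ ⟨hΦ i, hi⟩
  have h2 : Φ i = Φ i ∪ {θ} :=
    Finset.eq_of_subset_of_card_le Finset.subset_union_left (hmax i _ h1)
  show θ ∈ Φ i
  rw [h2]
  simp
end

section
/- Let κ be an infinite cardinal, X a meet-semilattice with |X| ≤ κ, F a proper filter on κ, and Π a collection of large partitions of κ that is polyconsistent with F. Let f : X → P(κ) be monotone with f(x) ∈ F for all x ∈ X, and let P ∈ Π. Then there exists g : X → P(κ) such that: g(x) ⊆ f(x) for all x; g(x ⊓ y) = g(x) ∩ g(y) for all x, y ∈ X; the filter F' generated by F ∪ {g(x) : x ∈ X} is proper; and Π \ {P} is polyconsistent with F'. -/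
open Cardinal

universe u

/-- A partition of `α`: a set of pairwise disjoint nonempty subsets covering `α`. -/
def IsPartition {α : Type u} (P : Set (Set α)) : Prop :=
  (∀ C ∈ P, C.Nonempty) ∧ (∀ C ∈ P, ∀ D ∈ P, C ≠ D → C ∩ D = ∅) ∧ ⋃₀ P = Set.univ

/-- A polycell of a collection `Ps` of partitions: an intersection of one cell from
each of finitely many (at least one) distinct partitions in `Ps`. -/
def IsPolycell {α : Type u} (Ps : Set (Set (Set α))) (C : Set α) : Prop :=
  ∃ t : Finset (Set (Set α)), (t : Set (Set (Set α))) ⊆ Ps ∧ t.Nonempty ∧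
    ∃ c : Set (Set α) → Set α, (∀ P ∈ t, c P ∈ P) ∧ C = ⋂ P ∈ t, c P

/-- `con F`: the sets meeting every member of the filter `F`. -/
def conF {α : Type u} (F : Filter α) : Set (Set α) :=
  {y : Set α | ∀ x ∈ F, (x ∩ y).Nonempty}

/-- `Ps` is polyconsistent with `F` if every polycell of `Ps` is consistent with `F`. -/
def Polyconsistent {α : Type u} (Ps : Set (Set (Set α))) (F : Filter α) : Prop :=
  ∀ C : Set α, IsPolycell Ps C → C ∈ conF F

/-! Since `|X| ≤ κ = |P|`, the elements `x` of `X` can be labelled by distinct cells `E x` of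
`P`; put `g x = ⋃_{y ≤ x} f y ∩ E y`. Disjointness of the cells makes `g` preserve meets, so every
member of the filter generated by `F ∪ ran g` contains some `A ∩ g x ⊇ A ∩ f x ∩ E x` with
`A ∈ F`. Consistency of a polycell `C` of `Ps \ {P}` with that filter thus reduces to
consistency of the polycell `E x ∩ C` of `Ps` with `F`. -/

open Filter Function Set

section

variable {α : Type u}

lemma IsPolycell.mono {Qs Ps : Set (Set (Set α))} (h : Qs ⊆ Ps) {C : Set α}
    (hC : IsPolycell Qs C) : IsPolycell Ps C := by
  obtain ⟨t, hts, htne, c, hc, rfl⟩ := hC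
  exact ⟨t, hts.trans h, htne, c, hc, rfl⟩

lemma isPolycell_of_mem {Ps : Set (Set (Set α))} {P : Set (Set α)} (hP : P ∈ Ps)
    {D : Set α} (hD : D ∈ P) : IsPolycell Ps D :=
  ⟨{P}, by simpa using hP, Finset.singleton_nonempty _, fun _ => D,
    fun Q hQ => by rwa [Finset.mem_singleton.mp hQ], by simp⟩

lemma IsPolycell.cell_inter {Ps : Set (Set (Set α))} {P : Set (Set α)} (hP : P ∈ Ps)
    {D : Set α} (hD : D ∈ P) {C : Set α} (hC : IsPolycell (Ps \ {P}) C) :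
    IsPolycell Ps (D ∩ C) := by
  classical
  obtain ⟨t, hts, -, c, hc, rfl⟩ := hC
  have hne : ∀ Q ∈ t, Q ≠ P := fun Q hQ => (hts hQ).2
  refine ⟨insert P t, ?_, Finset.insert_nonempty _ _, update c P D, ?_, ?_⟩
  · simpa [Set.insert_subset_iff, hP] using hts.trans sdiff_subset
  · simp only [Finset.forall_mem_insert, update_self, hD, true_and]
    exact fun Q hQ => (update_of_ne (hne Q hQ) _ _).symm ▸ hc Q hQ
  · rw [Finset.set_biInter_insert, update_self]
    exact congrArg _ <| iInter₂_congr fun Q hQ => (update_of_ne (hne Q hQ) _ _).symm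

lemma IsPartition.pairwise_disjoint_of_injective {X : Type*} {P : Set (Set α)}
    (hP : IsPartition P) {E : X → Set α} (hmem : ∀ x, E x ∈ P) (hinj : Injective E) :
    Pairwise (Disjoint on E) := fun x y hxy =>
  Set.disjoint_iff_inter_eq_empty.mpr <| hP.2.1 _ (hmem x) _ (hmem y) (hinj.ne hxy)

lemma mem_conF_of_subset {F : Filter α} {C D : Set α} (hC : C ∈ conF F) (h : C ⊆ D) :
    D ∈ conF F := fun A hA => (hC A hA).mono (inter_subset_inter_right A h)

lemma inter_mem_conF {F : Filter α} {B C : Set α} (hB : B ∈ F) (hC : C ∈ conF F) :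
    B ∩ C ∈ conF F := fun A hA => by
  simpa only [inter_assoc] using hC (A ∩ B) (inter_mem hA hB)

lemma univ_mem_conF_iff {F : Filter α} : Set.univ ∈ conF F ↔ F.NeBot := by
  simp [conF, ← forall_mem_nonempty_iff_neBot]

end

section

variable {α : Type u} {X : Type*} [SemilatticeInf X]

lemma exists_subset_of_mem_generate_range [Nonempty X] {g : X → Set α}
    (hg : ∀ x y, g (x ⊓ y) = g x ∩ g y) {B : Set α} (hB : B ∈ generate (range g)) :
    ∃ x, g x ⊆ B := by
  rw [generate_eq_biInf, iInf_range] at hB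
  have hmono : Monotone g := Monotone.of_map_inf hg
  have hdir : Directed (· ≥ ·) fun x => 𝓟 (g x) := fun x y =>
    ⟨x ⊓ y, principal_mono.mpr (hmono inf_le_left),
      principal_mono.mpr (hmono inf_le_right)⟩
  simpa only [mem_principal] using (mem_iInf_of_directed hdir B).mp hB

lemma mem_generate_union_range {F : Filter α} {g : X → Set α}
    (hg : ∀ x y, g (x ⊓ y) = g x ∩ g y) {S : Set α}
    (hS : S ∈ generate (F.sets ∪ range g)) :
    S ∈ F ∨ ∃ A ∈ F, ∃ x, A ∩ g x ⊆ S := by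
  rcases isEmpty_or_nonempty X with hX | hX
  · rw [range_eq_empty, union_empty] at hS
    exact .inl (le_generate_iff.mpr subset_rfl hS)
  rw [generate_union, mem_inf_iff_superset] at hS
  obtain ⟨A, hA, B, hB, hAB⟩ := hS
  replace hA : A ∈ F := le_generate_iff.mpr subset_rfl hA
  obtain ⟨x, hx⟩ := exists_subset_of_mem_generate_range hg hB
  exact .inr ⟨A, hA, x, (inter_subset_inter_right A hx).trans hAB⟩

lemma mem_conF_generate_union_range {F : Filter α} {g : X → Set α}
    (hg : ∀ x y, g (x ⊓ y) = g x ∩ g y) {C : Set α} (hC : C ∈ conF F)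
    (hgC : ∀ x, g x ∩ C ∈ conF F) : C ∈ conF (generate (F.sets ∪ range g)) := by
  intro S hS
  rcases mem_generate_union_range hg hS with hSF | ⟨A, hA, x, hAS⟩
  · exact hC S hSF
  · exact (hgC x A hA).mono fun a ha => ⟨hAS ⟨ha.1, ha.2.1⟩, ha.2.2⟩

def cellUnion (f E : X → Set α) (x : X) : Set α :=
  ⋃ y ≤ x, f y ∩ E y

lemma cellUnion_subset {f : X → Set α} (hf : Monotone f) (E : X → Set α) (x : X) :
    cellUnion f E x ⊆ f x :=
  iUnion₂_subset fun _ hy => inter_subset_left.trans (hf hy)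

lemma inter_subset_cellUnion (f E : X → Set α) (x : X) : f x ∩ E x ⊆ cellUnion f E x :=
  subset_iUnion₂_of_subset x le_rfl Subset.rfl

lemma cellUnion_inf (f : X → Set α) {E : X → Set α} (hE : Pairwise (Disjoint on E))
    (x y : X) :
    cellUnion f E (x ⊓ y) = cellUnion f E x ∩ cellUnion f E y := by
  ext a
  simp only [cellUnion, mem_iUnion, mem_inter_iff, exists_prop, le_inf_iff]
  constructor
  · rintro ⟨z, ⟨hzx, hzy⟩, ha⟩
    exact ⟨⟨z, hzx, ha⟩, ⟨z, hzy, ha⟩⟩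
  · rintro ⟨⟨z, hzx, ha⟩, ⟨w, hwy, -, haw⟩⟩
    obtain rfl : z = w := hE.eq (not_disjoint_iff.mpr ⟨a, ha.2, haw⟩)
    exact ⟨z, ⟨hzx, hwy⟩, ha⟩

end

theorem stmt_9_general (κ : Cardinal.{u})
    (X : Type u) [SemilatticeInf X] (hX : #X ≤ κ)
    (F : Filter κ.out) (hF : F.NeBot)
    (Ps : Set (Set (Set κ.out)))
    (hPs : ∀ P ∈ Ps, IsPartition P ∧ #P = κ)
    (hpoly : Polyconsistent Ps F)
    (f : X → Set κ.out) (hfmono : Monotone f) (hfF : ∀ x : X, f x ∈ F)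
    (P : Set (Set κ.out)) (hP : P ∈ Ps) :
    ∃ g : X → Set κ.out,
      (∀ x : X, g x ⊆ f x) ∧
      (∀ x y : X, g (x ⊓ y) = g x ∩ g y) ∧
      (Filter.generate (F.sets ∪ Set.range g)).NeBot ∧
      Polyconsistent (Ps \ {P}) (Filter.generate (F.sets ∪ Set.range g)) := by
  obtain ⟨hPpart, hPcard⟩ := hPs P hP
  obtain ⟨e⟩ := Cardinal.le_def X P |>.mp (hX.trans_eq hPcard.symm)
  set E : X → Set κ.out := fun x => e x
  have hEmem : ∀ x, E x ∈ P := fun x => (e x).2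
  have hg := cellUnion_inf f <| hPpart.pairwise_disjoint_of_injective hEmem
    (Subtype.val_injective.comp e.injective)
  have hcon : ∀ C, C ∈ conF F → (∀ x, E x ∩ C ∈ conF F) →
      C ∈ conF (generate (F.sets ∪ range (cellUnion f E))) := fun C hC hEC =>
    mem_conF_generate_union_range hg hC fun x =>
      mem_conF_of_subset (inter_mem_conF (hfF x) (hEC x)) fun _ ⟨hf, hE, hC⟩ =>
        ⟨inter_subset_cellUnion f E x ⟨hf, hE⟩, hC⟩
  refine ⟨cellUnion f E, cellUnion_subset hfmono E, hg, ?_, fun C hC => ?_⟩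
  · refine univ_mem_conF_iff.mp <| hcon Set.univ (univ_mem_conF_iff.mpr hF) fun x => ?_
    simpa using hpoly _ (isPolycell_of_mem hP (hEmem x))
  · exact hcon C (hpoly C (hC.mono sdiff_subset)) fun x => hpoly _ (hC.cell_inter hP (hEmem x))

/-- Given a meet-semilattice `X` with `|X| ≤ κ`, a proper filter `F`
on `κ`, a collection `Ps` of large partitions of `κ` polyconsistent with `F`, a
monotone `f : X → F`, and `P ∈ Ps`, there is a multiplicative `g ≤ f` such that the
filter generated by `F ∪ ran g` is proper and `Ps \ {P}` is polyconsistent with it. -/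
theorem stmt_9 (κ : Cardinal.{u}) (hκ : Cardinal.aleph0 ≤ κ)
    (X : Type u) [SemilatticeInf X] (hX : #X ≤ κ)
    (F : Filter κ.out) (hF : F.NeBot)
    (Ps : Set (Set (Set κ.out)))
    (hPs : ∀ P ∈ Ps, IsPartition P ∧ #P = κ)
    (hpoly : Polyconsistent Ps F)
    (f : X → Set κ.out) (hfmono : Monotone f) (hfF : ∀ x : X, f x ∈ F)
    (P : Set (Set κ.out)) (hP : P ∈ Ps) :
    ∃ g : X → Set κ.out,
      (∀ x : X, g x ⊆ f x) ∧
      (∀ x y : X, g (x ⊓ y) = g x ∩ g y) ∧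
      (Filter.generate (F.sets ∪ Set.range g)).NeBot ∧
      Polyconsistent (Ps \ {P}) (Filter.generate (F.sets ∪ Set.range g)) :=
  stmt_9_general κ X hX F hF Ps hPs hpoly f hfmono hfF P hP
end

section
/- Let κ be an infinite cardinal, F a proper filter on κ, Π a collection of partitions of κ polyconsistent with F, and J ⊆ κ. Then either (a) Π is polyconsistent with the filter generated by F ∪ {J}, or (b) there is a finite subset Π₀ ⊆ Π such that Π \ Π₀ is polyconsistent with the filter generated by F ∪ {κ \ J}. -/
open Cardinal

universe u

/-
If some polycell `C` of `Ps`, built from the finitely many partitions `t`, is inconsistent with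
`F ⊓ 𝓟 J`, take `Ps₀ = t`. For a polycell `D` of `Ps \ t`, the set `C ∩ D` is again a polycell of
`Ps`, so it meets every member of `F`; since `C ∩ J` misses some member of `F`, this forces `D ∩ Jᶜ`
to meet every member of `F`, i.e. `D` is consistent with `F ⊓ 𝓟 Jᶜ`.
-/

open Filter

section

variable {α : Type u}

theorem mem_conF_iff_neBot {F : Filter α} {C : Set α} : C ∈ conF F ↔ (F ⊓ 𝓟 C).NeBot :=
  inf_principal_neBot_iff.symm

theorem conF_inf_principal {F : Filter α} {A C : Set α} :
    C ∈ conF (F ⊓ 𝓟 A) ↔ C ∩ A ∈ conF F := by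
  rw [mem_conF_iff_neBot, mem_conF_iff_neBot, inf_assoc, inf_principal, Set.inter_comm]

theorem generate_sets_union_singleton (F : Filter α) (A : Set α) :
    generate (F.sets ∪ {A}) = F ⊓ 𝓟 A := by
  rw [generate_union, generate_singleton]
  congr 1
  exact (giGenerate α).l_u_eq F

theorem inter_compl_mem_conF {F : Filter α} {C D J : Set α} (hCD : C ∩ D ∈ conF F)
    (hCJ : C ∩ J ∉ conF F) : D ∩ Jᶜ ∈ conF F := by
  intro X hX
  obtain ⟨Y, hY, hYCJ⟩ : ∃ Y ∈ F, ¬(Y ∩ (C ∩ J)).Nonempty := by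
    simpa [conF] using hCJ
  obtain ⟨x, ⟨hxX, hxY⟩, hxC, hxD⟩ := hCD (X ∩ Y) (inter_mem hX hY)
  exact ⟨x, hxX, hxD, fun hxJ => hYCJ ⟨x, hxY, hxC, hxJ⟩⟩

theorem IsPolycell.inter {Ps Qs : Set (Set (Set α))} {C D : Set α} (hC : IsPolycell Ps C)
    (hD : IsPolycell Qs D) (hdisj : Disjoint Ps Qs) : IsPolycell (Ps ∪ Qs) (C ∩ D) := by
  classical
  obtain ⟨s, hsPs, hsne, c, hc, rfl⟩ := hC
  obtain ⟨t, htQs, -, d, hd, rfl⟩ := hD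
  have hst : Disjoint s t := Finset.disjoint_coe.1 (hdisj.mono hsPs htQs)
  have hc' : ∀ P ∈ s, s.piecewise c d P = c P := fun P hP => s.piecewise_eq_of_mem _ _ hP
  have hd' : ∀ P ∈ t, s.piecewise c d P = d P :=
    fun P hP => s.piecewise_eq_of_notMem _ _ (Finset.disjoint_right.1 hst hP)
  refine ⟨s ∪ t, ?_, hsne.mono Finset.subset_union_left, s.piecewise c d, ?_, ?_⟩
  · rw [Finset.coe_union]
    exact Set.union_subset_union hsPs htQs
  · intro P hP
    rcases Finset.mem_union.1 hP with hP | hP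
    · exact hc' P hP ▸ hc P hP
    · exact hd' P hP ▸ hd P hP
  · rw [Finset.set_biInter_inter]
    congr 1 <;> refine Set.iInter₂_congr fun P hP => ?_
    exacts [(hc' P hP).symm, (hd' P hP).symm]

theorem IsPolycell.exists_finset {Ps : Set (Set (Set α))} {C : Set α}
    (hC : IsPolycell Ps C) :
    ∃ t : Finset (Set (Set α)), ↑t ⊆ Ps ∧ IsPolycell ↑t C := by
  obtain ⟨t, htPs, htne, c, hc, hC⟩ := hC
  exact ⟨t, htPs, t, subset_rfl, htne, c, hc, hC⟩

end

theorem stmt_10_general (κ : Cardinal.{u})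
    (F : Filter κ.out)
    (Ps : Set (Set (Set κ.out)))
    (hpoly : Polyconsistent Ps F)
    (J : Set κ.out) :
    Polyconsistent Ps (Filter.generate (F.sets ∪ {J})) ∨
    ∃ Ps₀ : Set (Set (Set κ.out)), Ps₀ ⊆ Ps ∧ Ps₀.Finite ∧
      Polyconsistent (Ps \ Ps₀) (Filter.generate (F.sets ∪ {Jᶜ})) := by
  simp only [Polyconsistent, generate_sets_union_singleton, conF_inf_principal]
  by_contra! ⟨⟨C, hC, hCJ⟩, hcofinite⟩
  obtain ⟨t, htPs, hCt⟩ := hC.exists_finset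
  obtain ⟨D, hD, hDJ⟩ := hcofinite t htPs t.finite_toSet
  have hCD : IsPolycell Ps (C ∩ D) := by
    simpa [Set.union_sdiff_cancel htPs] using hCt.inter hD Set.disjoint_sdiff_right
  exact hDJ (inter_compl_mem_conF (hpoly _ hCD) hCJ)

/-- If `F` is a proper filter on an infinite cardinal `κ`, `Ps` a
collection of partitions of `κ` polyconsistent with `F`, and `J ⊆ κ`, then either
`Ps` is polyconsistent with the filter generated by `F ∪ {J}`, or some cofinite
subcollection `Ps \ Ps₀` (`Ps₀` finite) is polyconsistent with the filter generated
by `F ∪ {κ \ J}`. -/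
theorem stmt_10 (κ : Cardinal.{u}) (hκ : Cardinal.aleph0 ≤ κ)
    (F : Filter κ.out) (hF : F.NeBot)
    (Ps : Set (Set (Set κ.out)))
    (hPs : ∀ P ∈ Ps, IsPartition P)
    (hpoly : Polyconsistent Ps F)
    (J : Set κ.out) :
    Polyconsistent Ps (Filter.generate (F.sets ∪ {J})) ∨
    ∃ Ps₀ : Set (Set (Set κ.out)), Ps₀ ⊆ Ps ∧ Ps₀.Finite ∧
      Polyconsistent (Ps \ Ps₀) (Filter.generate (F.sets ∪ {Jᶜ})) :=
  stmt_10_general κ F Ps hpoly J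
end

section
/- For every infinite cardinal κ there exists a collection Π of partitions of κ such that: |Π| = 2^κ; every partition in Π is large, i.e., has exactly κ cells; and Π is independent, i.e., for any finitely many pairwise distinct partitions P₁, …, Pₙ ∈ Π and any choice of cells Cᵢ ∈ Pᵢ, the intersection C₁ ∩ … ∩ Cₙ is nonempty. -/
open Cardinal

universe u


/-!
Hausdorff's construction. A point of `HausdorffCell α` is a finite set `σ ⊆ α` together with a
map `f : 𝒫(σ) → α`, and a set `X ⊆ α` acts on it by `(σ, f) ↦ f (σ ∩ X)`. Finitely many distinct
sets `X₁, …, Xₙ` are separated by a finite `σ`, so their traces `σ ∩ Xᵢ` are distinct and `f` can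
prescribe the values at all of them at once: the family of these maps is independent. For
infinite `α` there are `|α|` such cells, so transporting along a bijection with `α` gives `2^|α|`
independent maps `α → α`, whose fibre partitions have `|α|` cells, are pairwise distinct, and
are independent.
-/

open Function Set

def fibers {β γ : Type*} (f : β → γ) : Set (Set β) := range fun c => f ⁻¹' {c}

theorem isPartition_fibers {β : Type u} {γ : Type*} {f : β → γ} (hf : Surjective f) :
    IsPartition (fibers f) := by
  refine ⟨?_, ?_, ?_⟩
  · rintro _ ⟨c, rfl⟩
    exact hf c
  · rintro _ ⟨c, rfl⟩ _ ⟨d, rfl⟩ hne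
    have hcd : c ≠ d := by rintro rfl; exact hne rfl
    exact ((disjoint_singleton.2 hcd).preimage f).inter_eq
  · rw [fibers, sUnion_range, ← preimage_iUnion, iUnion_singleton_eq_range, range_id',
      preimage_univ]

theorem mk_fibers {β γ : Type u} {f : β → γ} (hf : Surjective f) : #(fibers f) = #γ :=
  mk_range_eq _ ((preimage_injective.2 hf).comp singleton_injective)

def IsIndependentFamily {ι β γ : Type*} (g : ι → β → γ) : Prop :=
  ∀ s : Finset ι, Surjective fun b (i : s) => g i b

namespace IsIndependentFamily

variable {ι α β γ : Type*} {g : ι → β → γ}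

theorem exists_apply_eq (h : IsIndependentFamily g) (s : Finset ι) (v : ι → γ) :
    ∃ b, ∀ i ∈ s, g i b = v i := by
  obtain ⟨b, hb⟩ := h s fun i => v i
  exact ⟨b, fun i hi => congrFun hb ⟨i, hi⟩⟩

theorem surjective (h : IsIndependentFamily g) (i : ι) : Surjective (g i) := fun c =>
  (h.exists_apply_eq {i} fun _ => c).imp fun _ hb => hb i (Finset.mem_singleton_self i)

theorem comp_surjective (h : IsIndependentFamily g) {e : α → β} (he : Surjective e) :
    IsIndependentFamily fun i a => g i (e a) := by
  intro s v
  obtain ⟨b, hb⟩ := h s v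
  obtain ⟨a, rfl⟩ := he b
  exact ⟨a, hb⟩

theorem injective_fibers [Nontrivial γ] (h : IsIndependentFamily g) :
    Injective fun i => fibers (g i) := by
  classical
  intro i j (hij : fibers (g i) = fibers (g j))
  by_contra hne
  obtain ⟨c, d, hcd⟩ := exists_pair_ne γ
  obtain ⟨b, hb⟩ := h.exists_apply_eq {i, j} fun k => if k = i then c else d
  obtain ⟨b', hb'⟩ := h.exists_apply_eq {i, j} fun _ => c
  -- `b` and `b'` lie in the same fibre of `g i`, which is then a fibre of `g j`, yet `g j`
  -- separates them
  obtain ⟨e, he : g j ⁻¹' {e} = g i ⁻¹' {c}⟩ : g i ⁻¹' {c} ∈ fibers (g j) := by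
    rw [← hij]; exact mem_range_self c
  have hbe : g j b = e := by
    change b ∈ g j ⁻¹' {e}; rw [he]; simpa using hb i (by simp)
  have hb'e : g j b' = e := by
    change b' ∈ g j ⁻¹' {e}; rw [he]; simpa using hb' i (by simp)
  have hbd : g j b = d := by simpa [Ne.symm hne] using hb j (by simp)
  have hb'c : g j b' = c := by simpa using hb' j (by simp)
  exact hcd (hb'c.symm.trans (hb'e.trans (hbe.symm.trans hbd)))

theorem iInter_nonempty (h : IsIndependentFamily g) {t : Finset (Set (Set β))}
    (ht : ↑t ⊆ range fun i => fibers (g i)) (c : Set (Set β) → Set β) (hc : ∀ P ∈ t, c P ∈ P) :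
    (⋂ P ∈ t, c P).Nonempty := by
  classical
  rw [← image_univ, Finset.subset_set_image_iff] at ht
  obtain ⟨s, -, rfl⟩ := ht
  have hval : ∀ i : s, ∃ v, g i ⁻¹' {v} = c (fibers (g i)) := fun i =>
    hc _ (Finset.mem_image_of_mem _ i.2)
  choose v hv using hval
  obtain ⟨b, hb⟩ := h s v
  refine ⟨b, mem_iInter₂.2 ?_⟩
  simp only [Finset.mem_image]
  rintro _ ⟨i, hi, rfl⟩
  rw [← hv ⟨i, hi⟩]
  exact congrFun hb ⟨i, hi⟩

end IsIndependentFamily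

section Hausdorff

variable {α : Type*}

theorem exists_finset_injOn_preimage_val (t : Finset (Set α)) :
    ∃ σ : Finset α, InjOn (fun X => ((↑) : σ → α) ⁻¹' X) t := by
  classical
  -- a finset rather than a point, so that nothing need be chosen in `α` when `X = Y`
  have hsep : ∀ p : Set α × Set α,
      ∃ u : Finset α, ↑u ⊆ symmDiff p.1 p.2 ∧ (p.1 ≠ p.2 → u.Nonempty) := by
    rintro ⟨X, Y⟩
    by_cases hXY : X = Y
    · exact ⟨∅, by simp, fun h => (h hXY).elim⟩
    · obtain ⟨a, ha⟩ := symmDiff_nonempty.2 hXY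
      exact ⟨{a}, by simpa using ha, fun _ => Finset.singleton_nonempty a⟩
  choose u hu_sub hu_ne using hsep
  refine ⟨(t ×ˢ t).biUnion u, fun X hX Y hY hXY => ?_⟩
  by_contra hne
  obtain ⟨a, ha⟩ := hu_ne (X, Y) hne
  have haσ : a ∈ (t ×ˢ t).biUnion u := Finset.mem_biUnion.2 ⟨(X, Y), by simp_all, ha⟩
  have hiff : a ∈ X ↔ a ∈ Y := by
    simpa using Set.ext_iff.1 hXY ⟨a, haσ⟩
  rcases hu_sub (X, Y) ha with h | h
  · exact h.2 (hiff.1 h.1)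
  · exact h.2 (hiff.2 h.1)

def HausdorffCell (α : Type*) := Σ σ : Finset α, (Set σ → α)

def hausdorffFun (X : Set α) (p : HausdorffCell α) : α := p.2 ((↑) ⁻¹' X)

theorem isIndependentFamily_hausdorffFun [Nonempty α] :
    IsIndependentFamily (hausdorffFun (α := α)) := by
  intro s v
  obtain ⟨σ, hσ⟩ := exists_finset_injOn_preimage_val s
  set τ : s → Set σ := fun X => (↑) ⁻¹' X.1
  have hτ : Injective τ := fun X Y h => Subtype.ext (hσ X.2 Y.2 h)
  refine ⟨⟨σ, extend τ v fun _ => Classical.arbitrary α⟩, funext fun X => ?_⟩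
  dsimp only [hausdorffFun]
  exact hτ.extend_apply v _ X

theorem mk_hausdorffCell {α : Type u} [Infinite α] : #(HausdorffCell α) = #α := by
  have hfiber : ∀ σ : Finset α, #(Set σ → α) = #α := fun σ => by
    rw [mk_arrow, lift_id, lift_id]
    exact pow_eq (aleph0_le_mk α) (Cardinal.one_le_iff_ne_zero.2 (mk_ne_zero _))
      (lt_aleph0_of_finite _)
  calc #(HausdorffCell α) = sum fun σ : Finset α => #(Set σ → α) := mk_sigma _
    _ = #(Finset α) * #α := by simp_rw [hfiber, sum_const']
    _ = #α := by rw [mk_finset_of_infinite, mul_eq_self (aleph0_le_mk α)]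

end Hausdorff

/-- For every infinite cardinal `κ` there is a collection `Ps` of
`2 ^ κ` independent large partitions of `κ`: each partition has exactly `κ` cells,
and any choice of one cell from each of finitely many distinct partitions of `Ps`
has nonempty intersection. -/
theorem stmt_12 (κ : Cardinal.{u}) (hκ : Cardinal.aleph0 ≤ κ) :
    ∃ Ps : Set (Set (Set κ.out)),
      #Ps = 2 ^ κ ∧
      (∀ P ∈ Ps, IsPartition P ∧ #P = κ) ∧
      (∀ t : Finset (Set (Set κ.out)), (t : Set (Set (Set κ.out))) ⊆ Ps → t.Nonempty →
        ∀ c : Set (Set κ.out) → Set κ.out, (∀ P ∈ t, c P ∈ P) →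
          (⋂ P ∈ t, c P).Nonempty) := by
  have hα : #κ.out = κ := mk_out κ
  have : Infinite κ.out := infinite_iff.2 (hα.symm ▸ hκ)
  obtain ⟨e⟩ := Cardinal.eq.1 (mk_hausdorffCell (α := κ.out))
  have hg : IsIndependentFamily fun X a => hausdorffFun X (e.symm a) :=
    isIndependentFamily_hausdorffFun.comp_surjective e.symm.surjective
  refine ⟨range fun X => fibers fun a => hausdorffFun X (e.symm a), ?_, ?_,
    fun t ht _ c hc => hg.iInter_nonempty ht c hc⟩
  · rw [mk_range_eq _ hg.injective_fibers, mk_set, hα]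
  · rintro _ ⟨X, rfl⟩
    exact ⟨isPartition_fibers (hg.surjective X), by rw [mk_fibers (hg.surjective X), hα]⟩
end

section
/- Let κ be an infinite cardinal and let Γ be the set of pairs (s, r) where s is a finite subset of κ and r is a function from the set of subsets of s to κ. For J ⊆ κ define f_J : Γ → κ by f_J(s, r) = r(s ∩ J). Then for every n ≥ 1, every n pairwise distinct subsets J₁, …, Jₙ of κ, and every γ₁, …, γₙ ∈ κ, there exists ξ ∈ Γ with f_{J_i}(ξ) = γ_i for all 1 ≤ i ≤ n. -/
open Cardinal

universe u

/-- Let `Γ` be the set of pairs `(s, r)` with `s` a finite subset of the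
infinite cardinal `κ` and `r` a function from the subsets of `s` to `κ`, and for
`J ⊆ κ` let `f_J (s, r) = r (s ∩ J)`. Then for any `n ≥ 1` pairwise distinct subsets
`J 1, …, J n` of `κ` and any `γ 1, …, γ n ∈ κ` the system `f_{J i} ξ = γ i` has a
solution `ξ ∈ Γ`. -/
theorem stmt_13 (κ : Cardinal.{u}) (hκ : Cardinal.aleph0 ≤ κ)
    (n : ℕ) (hn : 1 ≤ n) (J : Fin n → Set κ.out) (hJ : Function.Injective J)
    (γ : Fin n → κ.out) :
    ∃ ξ : Σ s : Finset κ.out, Set {x : κ.out // x ∈ s} → κ.out,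
      ∀ i : Fin n, ξ.2 {x : {x : κ.out // x ∈ ξ.1} | (x : κ.out) ∈ J i} = γ i := by
  classical
  -- pick separating points
  have sep : ∀ i j : Fin n, i ≠ j → ∃ x : κ.out, (x ∈ J i ∧ x ∉ J j) ∨ (x ∈ J j ∧ x ∉ J i) := by
    intro i j hij
    by_contra h
    push_neg at h
    apply hij
    apply hJ
    ext x
    have := h x
    tauto
  choose w hw using fun i j (h : i ≠ j) => sep i j h
  let s : Finset κ.out :=
    Finset.univ.image fun p : {p : Fin n × Fin n // p.1 ≠ p.2} => w p.1.1 p.1.2 p.2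
  let S : Fin n → Set {x : κ.out // x ∈ s} := fun i => {x | (x : κ.out) ∈ J i}
  have hS : Function.Injective S := by
    intro i j hij
    by_contra hne
    obtain ⟨h1, h2⟩ | ⟨h1, h2⟩ := hw i j hne
    · have hmem : w i j hne ∈ s := by
        simp only [s, Finset.mem_image]
        exact ⟨⟨(i, j), hne⟩, Finset.mem_univ _, rfl⟩
      have : (⟨w i j hne, hmem⟩ : {x : κ.out // x ∈ s}) ∈ S i := h1
      rw [hij] at this
      exact h2 this
    · have hmem : w i j hne ∈ s := by
        simp only [s, Finset.mem_image]
        exact ⟨⟨(i, j), hne⟩, Finset.mem_univ _, rfl⟩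
      have : (⟨w i j hne, hmem⟩ : {x : κ.out // x ∈ s}) ∈ S j := h1
      rw [← hij] at this
      exact h2 this
  refine ⟨⟨s, Function.extend S γ fun _ => γ ⟨0, hn⟩⟩, fun i => ?_⟩
  show Function.extend S γ (fun _ => γ ⟨0, hn⟩) (S i) = γ i
  exact hS.extend_apply γ _ i
end

section
/- Let κ be an infinite cardinal, B a set with |B| ≤ κ, and f : B → P(κ) a function such that |f(b)| = κ for every b ∈ B. Then there exists h : B → P(κ) such that h(b) ⊆ f(b) and |h(b)| = κ for every b ∈ B, and the sets h(b) are pairwise disjoint: h(b) ∩ h(b') = ∅ whenever b ≠ b'. -/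
open Cardinal

universe u

section Aux

variable (κ : Cardinal.{u})

/-- Nonemptiness key lemma: removing fewer than κ elements from a κ-sized set leaves it nonempty. -/
theorem key_nonempty (hκ : Cardinal.aleph0 ≤ κ) (q : Set κ.out) (hq : #q = κ)
    (s : Set κ.out) (hs : #s < κ) : (q \ s).Nonempty := by
  rw [Set.nonempty_iff_ne_empty]
  intro h
  have hsub : q ⊆ s := by
    intro x hx
    by_contra hxs
    exact (Set.eq_empty_iff_forall_notMem.1 h x) ⟨hx, hxs⟩
  have := Cardinal.mk_le_mk_of_subset hsub
  rw [hq] at this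
  exact absurd this (not_le.2 hs)

noncomputable def pickF (hκ : Cardinal.aleph0 ≤ κ)
    (q : κ.ord.ToType → Set κ.out) (hq : ∀ t, #(q t) = κ) : κ.ord.ToType → κ.out :=
  (IsWellFounded.wf (r := ((· < ·) : κ.ord.ToType → κ.ord.ToType → Prop))).fix
    (fun t ih =>
      (key_nonempty κ hκ (q t) (hq t) {y | ∃ s, ∃ hs : s < t, ih s hs = y}
        (by
          have : #{y | ∃ s, ∃ hs : s < t, ih s hs = y} ≤ #(Set.Iio t) := by
            apply Cardinal.mk_le_of_surjective (f := fun (p : Set.Iio t) =>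
              (⟨ih p.1 p.2, ⟨p.1, p.2, rfl⟩⟩ : {y | ∃ s, ∃ hs : s < t, ih s hs = y}))
            rintro ⟨y, s, hs, rfl⟩
            exact ⟨⟨s, hs⟩, rfl⟩
          exact lt_of_le_of_lt this (Cardinal.mk_Iio_ord_toType t))).choose)

theorem pickF_spec (hκ : Cardinal.aleph0 ≤ κ)
    (q : κ.ord.ToType → Set κ.out) (hq : ∀ t, #(q t) = κ) (t : κ.ord.ToType) :
    pickF κ hκ q hq t ∈ q t ∧ ∀ s, s < t → pickF κ hκ q hq s ≠ pickF κ hκ q hq t := by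
  have h := (IsWellFounded.wf (r := ((· < ·) : κ.ord.ToType → κ.ord.ToType → Prop))).fix_eq
    (fun t ih =>
      (key_nonempty κ hκ (q t) (hq t) {y | ∃ s, ∃ hs : s < t, ih s hs = y}
        (by
          have : #{y | ∃ s, ∃ hs : s < t, ih s hs = y} ≤ #(Set.Iio t) := by
            apply Cardinal.mk_le_of_surjective (f := fun (p : Set.Iio t) =>
              (⟨ih p.1 p.2, ⟨p.1, p.2, rfl⟩⟩ : {y | ∃ s, ∃ hs : s < t, ih s hs = y}))
            rintro ⟨y, s, hs, rfl⟩
            exact ⟨⟨s, hs⟩, rfl⟩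
          exact lt_of_le_of_lt this (Cardinal.mk_Iio_ord_toType t))).choose) t
  have hc := (key_nonempty κ hκ (q t) (hq t)
      {y | ∃ s, ∃ hs : s < t, pickF κ hκ q hq s = y} (by
          have : #{y | ∃ s, ∃ hs : s < t, pickF κ hκ q hq s = y} ≤ #(Set.Iio t) := by
            apply Cardinal.mk_le_of_surjective (f := fun (p : Set.Iio t) =>
              (⟨pickF κ hκ q hq p.1, ⟨p.1, p.2, rfl⟩⟩ :
                {y | ∃ s, ∃ hs : s < t, pickF κ hκ q hq s = y}))
            rintro ⟨y, s, hs, rfl⟩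
            exact ⟨⟨s, hs⟩, rfl⟩
          exact lt_of_le_of_lt this (Cardinal.mk_Iio_ord_toType t))).choose_spec
  have e : pickF κ hκ q hq t ∈
      q t \ {y | ∃ s, ∃ hs : s < t, pickF κ hκ q hq s = y} := by
    unfold pickF at hc ⊢
    rw [h]
    exact hc
  refine ⟨e.1, fun s hs hne => e.2 ⟨s, hs, hne⟩⟩

end Aux

theorem pickF_inj (κ : Cardinal.{u}) (hκ : Cardinal.aleph0 ≤ κ)
    (q : κ.ord.ToType → Set κ.out) (hq : ∀ t, #(q t) = κ) :
    Function.Injective (pickF κ hκ q hq) := by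
  intro a b hab
  by_contra hne
  rcases lt_or_gt_of_ne hne with h | h
  · exact (pickF_spec κ hκ q hq b).2 a h hab
  · exact (pickF_spec κ hκ q hq a).2 b h hab.symm


/-- If `κ` is an infinite cardinal, `B` a set with `|B| ≤ κ`, and
`f : B → P(κ)` assigns to each `b` a subset of `κ` of cardinality `κ`, then there
is `h : B → P(κ)` with `h b ⊆ f b`, `|h b| = κ`, and the `h b` pairwise disjoint. -/
theorem stmt_14 (κ : Cardinal.{u}) (hκ : Cardinal.aleph0 ≤ κ)
    (B : Type u) (hB : #B ≤ κ)
    (f : B → Set κ.out) (hf : ∀ b : B, #(f b) = κ) :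
    ∃ h : B → Set κ.out,
      (∀ b : B, h b ⊆ f b ∧ #(h b) = κ) ∧
      (∀ b b' : B, b ≠ b' → h b ∩ h b' = ∅) := by
  rcases isEmpty_or_nonempty B with hB0 | hB1
  · exact ⟨f, fun b => ⟨subset_rfl, hf b⟩, fun b => isEmptyElim b⟩
  · have h1 : #(B × κ.out) = κ := by
      have hp : #(B × κ.out) = #B * κ := by
        rw [Cardinal.mk_prod, Cardinal.lift_id, Cardinal.lift_id, Cardinal.mk_out]
      apply le_antisymm
      · rw [hp]
        calc #B * κ ≤ κ * κ := mul_le_mul_left hB κ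
        _ = κ := Cardinal.mul_eq_self hκ
      · rw [hp]
        calc κ = 1 * κ := (one_mul κ).symm
        _ ≤ #B * κ := mul_le_mul_left (Cardinal.one_le_iff_ne_zero.2 (Cardinal.mk_ne_zero B)) κ
    have he : Nonempty (κ.ord.ToType ≃ B × κ.out) := by
      apply Cardinal.eq.1
      rw [Cardinal.mk_ord_toType, h1]
    obtain ⟨p⟩ := he
    set q : κ.ord.ToType → Set κ.out := fun t => f (p t).1 with hqdef
    have hq : ∀ t, #(q t) = κ := fun t => hf _
    set x := pickF κ hκ q hq with hxdef
    refine ⟨fun b => {y | ∃ t, (p t).1 = b ∧ x t = y}, fun b => ⟨?_, ?_⟩, ?_⟩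
    · rintro y ⟨t, hb, rfl⟩
      rw [← hb]
      exact (pickF_spec κ hκ q hq t).1
    · apply le_antisymm
      · refine le_trans (Cardinal.mk_le_mk_of_subset ?_) (le_of_eq (hf b))
        rintro y ⟨t, hb, rfl⟩
        rw [← hb]
        exact (pickF_spec κ hκ q hq t).1
      · refine le_trans (le_of_eq (Cardinal.mk_out κ).symm) ?_
        apply Cardinal.mk_le_of_injective
          (f := fun i : κ.out => (⟨x (p.symm (b, i)),
            ⟨p.symm (b, i), by simp, rfl⟩⟩ : {y | ∃ t, (p t).1 = b ∧ x t = y}))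
        intro i j hij
        have := pickF_inj κ hκ q hq (Subtype.mk_eq_mk.1 hij)
        have := p.symm.injective this
        exact (Prod.mk.injEq _ _ _ _ ▸ this).2
    · intro b b' hbb
      rw [Set.eq_empty_iff_forall_notMem]
      rintro y ⟨⟨t, hb, hy⟩, ⟨t', hb', hy'⟩⟩
      have : t = t' := pickF_inj κ hκ q hq (hy.trans hy'.symm)
      exact hbb (hb ▸ hb' ▸ this ▸ rfl)
end

section
/- Let κ be an infinite cardinal and E a collection of subsets of κ with |E| ≤ κ such that every intersection of finitely many members of E (including each member itself) has cardinality κ. Then there exists a collection Π of partitions of κ with |Π| = 2^κ such that Π is polyconsistent with the filter generated by E, i.e., every polycell of Π has nonempty intersection with every member of the filter generated by E. -/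
open Cardinal

universe u

/-- A system of distinct representatives for `≤ κ` many sets of size `κ`. -/
lemma exists_sdr {κ : Cardinal.{u}} {β : Type u} (F : κ.ord.ToType → Set β)
    (hF : ∀ a, κ ≤ #(F a)) :
    ∃ e : κ.ord.ToType → β, Function.Injective e ∧ ∀ a, e a ∈ F a := by
  classical
  have key : ∀ (a : κ.ord.ToType) (f : Set.Iio a → β), (F a \ Set.range f).Nonempty := by
    intro a f
    rw [Set.diff_nonempty]
    intro hsub
    have h1 : #(F a) ≤ #(Set.range f) := Cardinal.mk_le_mk_of_subset hsub
    have h2 : #(Set.range f) ≤ #(Set.Iio a) := Cardinal.mk_range_le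
    have h3 : #(Set.Iio a) < κ := Cardinal.mk_Iio_ord_toType a
    exact absurd ((hF a).trans (h1.trans h2)) (not_le.mpr h3)
  have wf : WellFounded ((· < ·) : κ.ord.ToType → κ.ord.ToType → Prop) :=
    (inferInstance : WellFoundedLT κ.ord.ToType).wf
  set e : κ.ord.ToType → β :=
    wf.fix (fun a ih => (key a (fun b : Set.Iio a => ih b.1 b.2)).some) with he
  have heq : ∀ a, e a = (key a (fun b : Set.Iio a => e b.1)).some := by
    intro a
    rw [he]
    exact wf.fix_eq _ a
  have hmem : ∀ a, e a ∈ F a \ Set.range (fun b : Set.Iio a => e b.1) := by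
    intro a; rw [heq a]; exact (key a _).some_mem
  refine ⟨e, ?_, fun a => (hmem a).1⟩
  intro a b hab
  rcases lt_trichotomy a b with h | h | h
  · exact absurd ⟨⟨a, h⟩, hab⟩ (hmem b).2
  · exact h
  · exact absurd ⟨⟨b, h⟩, hab.symm⟩ (hmem a).2

/-- If `E` is a collection of at most `κ` subsets of the infinite
cardinal `κ` such that every finite intersection of members of `E` has cardinality
`κ`, then there is a collection `Ps` of `2 ^ κ` partitions of `κ` each of whose
polycells meets every member of the filter generated by `E`. -/
theorem stmt_15 (κ : Cardinal.{u}) (hκ : Cardinal.aleph0 ≤ κ)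
    (E : Set (Set κ.out)) (hE : #E ≤ κ)
    (hfip : ∀ t : Finset (Set κ.out), (t : Set (Set κ.out)) ⊆ E →
      #(⋂₀ (t : Set (Set κ.out)) : Set κ.out) = κ) :
    ∃ Ps : Set (Set (Set κ.out)),
      #Ps = 2 ^ κ ∧
      (∀ P ∈ Ps, IsPartition P) ∧
      (∀ C : Set κ.out, IsPolycell Ps C →
        ∀ s ∈ Filter.generate E, (C ∩ s).Nonempty) := by
  classical
  have hX : #(κ.out) = κ := mk_out κ
  have hXinf : Infinite κ.out := by rw [Cardinal.infinite_iff, hX]; exact hκ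
  -- the collection of finite intersections of members of E
  set 𝒟 : Set (Set κ.out) := {S | ∃ t : Finset (Set κ.out), ↑t ⊆ E ∧ S = ⋂₀ ↑t} with h𝒟
  have hunivD : Set.univ ∈ 𝒟 := ⟨∅, by simp, by simp⟩
  have hDcardS : ∀ S ∈ 𝒟, #S = κ := by
    rintro S ⟨t, ht, rfl⟩; exact hfip t ht
  -- #𝒟 ≤ κ
  have hDle : #𝒟 ≤ κ := by
    have hfin : #(Finset ↥E) ≤ κ := by
      have h1 : #(Finset ↥E) ≤ #(List ↥E) :=
        Cardinal.mk_le_of_surjective (f := fun l : List ↥E => l.toFinset)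
          (fun s => ⟨s.toList, Finset.toList_toFinset s⟩)
      exact h1.trans ((Cardinal.mk_list_le_max _).trans (max_le hκ hE))
    refine le_trans ?_ hfin
    set q : Finset ↥E → Set κ.out := fun t => ⋂₀ ↑(t.image Subtype.val) with hq
    have hqD : ∀ t, q t ∈ 𝒟 := by
      intro t
      refine ⟨t.image Subtype.val, ?_, rfl⟩
      intro s hs
      simp only [Finset.coe_image, Set.mem_image, Finset.mem_coe] at hs
      obtain ⟨x, _, rfl⟩ := hs
      exact x.2
    apply Cardinal.mk_le_of_surjective (f := fun t : Finset ↥E => (⟨q t, hqD t⟩ : ↥𝒟))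
    rintro ⟨S, tS, htS, rfl⟩
    let emb' : {x // x ∈ tS} ↪ ↥E :=
      ⟨fun x => ⟨x.1, htS (Finset.mem_coe.mpr x.2)⟩, by
        intro x y hxy
        apply Subtype.ext
        have h2 := congrArg Subtype.val hxy
        exact h2⟩
    refine ⟨tS.attach.map emb', ?_⟩
    apply Subtype.ext
    have himg : Finset.image Subtype.val (tS.attach.map emb') = tS := by
      ext s
      simp only [Finset.mem_image, Finset.mem_map, Finset.mem_attach, true_and, emb',
        Function.Embedding.coeFn_mk]
      constructor
      · rintro ⟨a, ⟨b, rfl⟩, rfl⟩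
        exact b.2
      · intro hs
        exact ⟨emb' ⟨s, hs⟩, ⟨⟨s, hs⟩, rfl⟩, rfl⟩
    show (⋂₀ ↑(Finset.image Subtype.val (tS.attach.map emb')) : Set κ.out) = ⋂₀ ↑tS
    rw [himg]
  -- the index structure
  have hIle : #(Finset κ.out × Finset (Finset κ.out)) ≤ κ := by
    have h1 : #(Finset κ.out) = κ := by rw [Cardinal.mk_finset_of_infinite, hX]
    have h2 : #(Finset (Finset κ.out)) = κ := by rw [Cardinal.mk_finset_of_infinite, h1]
    rw [Cardinal.mk_prod, Cardinal.lift_id, Cardinal.lift_id, h1, h2,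
      Cardinal.mul_eq_self hκ]
  have hJle : #(↥𝒟 × (Finset κ.out × Finset (Finset κ.out))) ≤ κ := by
    rw [Cardinal.mk_prod, Cardinal.lift_id, Cardinal.lift_id]
    exact (mul_le_mul' hDle hIle).trans (le_of_eq (Cardinal.mul_eq_self hκ))
  haveI hJne : Nonempty (↥𝒟 × (Finset κ.out × Finset (Finset κ.out))) :=
    ⟨⟨⟨Set.univ, hunivD⟩, (∅, ∅)⟩⟩
  obtain ⟨emb⟩ : Nonempty (↥𝒟 × (Finset κ.out × Finset (Finset κ.out)) ↪ κ.ord.ToType) := by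
    rw [← Cardinal.le_def]
    rwa [Cardinal.mk_ord_toType]
  set p : κ.ord.ToType → ↥𝒟 × (Finset κ.out × Finset (Finset κ.out)) :=
    Function.invFun emb with hp
  have hpsurj : Function.Surjective p := Function.invFun_surjective emb.injective
  -- system of distinct representatives
  obtain ⟨e, einj, emem⟩ := exists_sdr (fun a => ((p a).1 : Set κ.out))
    (fun a => (hDcardS _ (p a).1.2).ge)
  set g : κ.out → Option (Finset κ.out × Finset (Finset κ.out)) :=
    fun x => (Function.partialInv e x).map (fun a => (p a).2) with hg
  have hreal : ∀ (S : ↥𝒟) (i : Finset κ.out × Finset (Finset κ.out)),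
      ∃ x, x ∈ (S : Set κ.out) ∧ g x = some i := by
    intro S i
    obtain ⟨a, ha⟩ := hpsurj (S, i)
    refine ⟨e a, ?_, ?_⟩
    · have h := emem a; rw [ha] at h; exact h
    · rw [hg]
      simp only [Function.partialInv_left einj a, Option.map_some, ha]
  -- the independent sets
  set Y : Set κ.out → Set κ.out :=
    fun A => {x | ∃ i, g x = some i ∧ i.1.filter (fun z => z ∈ A) ∈ i.2} with hY
  -- separation of finitely many distinct sets by a finite set
  have hsep : ∀ 𝔄 : Finset (Set κ.out), ∃ u : Finset κ.out,
      ∀ A ∈ 𝔄, ∀ B ∈ 𝔄,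
        u.filter (fun z => z ∈ A) = u.filter (fun z => z ∈ B) → A = B := by
    intro 𝔄
    have hw : ∀ A B : Set κ.out, A ≠ B → ∃ x : κ.out, ¬(x ∈ A ↔ x ∈ B) := by
      intro A B hAB
      by_contra h
      exact hAB (Set.ext fun x => by by_contra hx; exact h ⟨x, hx⟩)
    choose! w hwspec using hw
    refine ⟨(𝔄 ×ˢ 𝔄).image (fun q => w q.1 q.2), ?_⟩
    intro A hA B hB hfil
    by_contra hAB
    have hmemu : w A B ∈ (𝔄 ×ˢ 𝔄).image (fun q => w q.1 q.2) :=
      Finset.mem_image.mpr ⟨(A, B), Finset.mem_product.mpr ⟨hA, hB⟩, rfl⟩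
    refine hwspec A B hAB ⟨?_, ?_⟩
    · intro h
      have h1 : w A B ∈ Finset.filter (fun z => z ∈ A) ((𝔄 ×ˢ 𝔄).image (fun q => w q.1 q.2)) :=
        Finset.mem_filter.mpr ⟨hmemu, h⟩
      rw [hfil] at h1
      exact (Finset.mem_filter.mp h1).2
    · intro h
      have h1 : w A B ∈ Finset.filter (fun z => z ∈ B) ((𝔄 ×ˢ 𝔄).image (fun q => w q.1 q.2)) :=
        Finset.mem_filter.mpr ⟨hmemu, h⟩
      rw [← hfil] at h1
      exact (Finset.mem_filter.mp h1).2
  -- master realization lemma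
  have master : ∀ (𝔄 : Finset (Set κ.out)) (ε : Set κ.out → Prop) (S : Set κ.out),
      S ∈ 𝒟 → ∃ x ∈ S, ∀ A ∈ 𝔄, (x ∈ Y A ↔ ε A) := by
    intro 𝔄 ε S hS
    obtain ⟨u, hu⟩ := hsep 𝔄
    set 𝒜 : Finset (Finset κ.out) :=
      (𝔄.filter ε).image (fun A => u.filter (fun z => z ∈ A)) with h𝒜
    obtain ⟨x, hxS, hxg⟩ := hreal ⟨S, hS⟩ (u, 𝒜)
    refine ⟨x, hxS, ?_⟩
    intro A hA
    have hYmem : x ∈ Y A ↔ u.filter (fun z => z ∈ A) ∈ 𝒜 := by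
      rw [hY]
      simp only [Set.mem_setOf_eq]
      constructor
      · rintro ⟨i, hi, hpi⟩
        rw [hxg] at hi
        obtain rfl := (Option.some_inj.mp hi).symm
        exact hpi
      · intro h
        exact ⟨(u, 𝒜), hxg, h⟩
    rw [hYmem, h𝒜]
    constructor
    · intro h
      obtain ⟨B, hB, hBA⟩ := Finset.mem_image.mp h
      obtain ⟨hB𝔄, hBε⟩ := Finset.mem_filter.mp hB
      have : B = A := hu B hB𝔄 A hA hBA
      rwa [this] at hBε
    · intro h
      exact Finset.mem_image.mpr ⟨A, Finset.mem_filter.mpr ⟨hA, h⟩, rfl⟩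
  -- the partitions
  set Pm : Set κ.out → Set (Set κ.out) := fun A => {Y A, (Y A)ᶜ} with hPm
  have hYne : ∀ A, (Y A).Nonempty := by
    intro A
    obtain ⟨x, -, hx⟩ := master {A} (fun _ => True) Set.univ hunivD
    exact ⟨x, (hx A (Finset.mem_singleton_self A)).mpr trivial⟩
  have hYcne : ∀ A, ((Y A)ᶜ).Nonempty := by
    intro A
    obtain ⟨x, -, hx⟩ := master {A} (fun _ => False) Set.univ hunivD
    exact ⟨x, fun h => (hx A (Finset.mem_singleton_self A)).mp h⟩
  have hYnecomp : ∀ A, Y A ≠ (Y A)ᶜ := by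
    intro A h
    obtain ⟨x, hx⟩ := hYne A
    have hx' : x ∈ (Y A)ᶜ := h ▸ hx
    exact hx' hx
  have hYinj : ∀ A B : Set κ.out, A ≠ B → Y A ≠ Y B ∧ Y A ≠ (Y B)ᶜ := by
    intro A B hAB
    constructor
    · obtain ⟨x, -, hx⟩ := master {A, B} (fun C => C = A) Set.univ hunivD
      intro h
      have hxA : x ∈ Y A := (hx A (by simp)).mpr rfl
      have hxB : x ∉ Y B := fun hxB => hAB ((hx B (by simp)).mp hxB).symm
      rw [h] at hxA
      exact hxB hxA
    · obtain ⟨x, -, hx⟩ := master {A, B} (fun _ => True) Set.univ hunivD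
      intro h
      have hxA : x ∈ Y A := (hx A (by simp)).mpr trivial
      have hxB : x ∈ Y B := (hx B (by simp)).mpr trivial
      rw [h] at hxA
      exact hxA hxB
  have hPminj : Function.Injective Pm := by
    intro A B h
    by_contra hAB
    have h1 : Y A ∈ Pm B := by
      rw [← h, hPm]
      exact Set.mem_insert _ _
    rw [hPm] at h1
    simp only [Set.mem_insert_iff, Set.mem_singleton_iff] at h1
    rcases h1 with h1 | h1
    · exact (hYinj A B hAB).1 h1
    · exact (hYinj A B hAB).2 h1
  refine ⟨Set.range Pm, ?_, ?_, ?_⟩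
  · rw [Cardinal.mk_range_eq _ hPminj, Cardinal.mk_set, hX]
  · rintro P ⟨A, rfl⟩
    refine ⟨?_, ?_, ?_⟩
    · intro C hC
      simp only [hPm, Set.mem_insert_iff, Set.mem_singleton_iff] at hC
      rcases hC with rfl | rfl
      · exact hYne A
      · exact hYcne A
    · intro C hC D hD hCD
      simp only [hPm, Set.mem_insert_iff, Set.mem_singleton_iff] at hC hD
      rcases hC with rfl | rfl <;> rcases hD with rfl | rfl
      · exact absurd rfl hCD
      · exact Set.inter_compl_self _
      · exact Set.compl_inter_self _
      · exact absurd rfl hCD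
    · show ⋃₀ {Y A, (Y A)ᶜ} = Set.univ
      rw [Set.sUnion_pair, Set.union_compl_self]
  · rintro C ⟨t, htPs, htne, c, hc, rfl⟩ s hs
    rw [Filter.mem_generate_iff] at hs
    obtain ⟨t', ht'E, ht'fin, ht's⟩ := hs
    have hSD : ⋂₀ t' ∈ 𝒟 :=
      ⟨ht'fin.toFinset, by rwa [Set.Finite.coe_toFinset], by rw [Set.Finite.coe_toFinset]⟩
    set Aof : Set (Set κ.out) → Set κ.out := fun P => Function.invFun Pm P with hAof
    have hPA : ∀ P ∈ t, Pm (Aof P) = P := by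
      intro P hP
      obtain ⟨A, hA⟩ := htPs (Finset.mem_coe.mpr hP)
      exact Function.invFun_eq ⟨A, hA⟩
    obtain ⟨x, hxS, hx⟩ := master (t.image Aof) (fun A => c (Pm A) = Y A) _ hSD
    refine ⟨x, ?_, ht's hxS⟩
    simp only [Set.mem_iInter]
    intro P hP
    have hx' := hx (Aof P) (Finset.mem_image_of_mem _ hP)
    have hcP := hc P hP
    rw [← hPA P hP] at hcP
    rw [← hPA P hP]
    rw [hPm] at hcP
    simp only [Set.mem_insert_iff, Set.mem_singleton_iff] at hcP
    rcases hcP with h1 | h1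
    · rw [h1]
      exact hx'.mpr h1
    · rw [h1]
      intro hxY
      have h2 : c (Pm (Aof P)) = Y (Aof P) := hx'.mp hxY
      rw [h1] at h2
      exact hYnecomp (Aof P) h2.symm
end

section
/- Let L be a countable first-order language, I a nonempty set, U a countably incomplete ultrafilter on I, and (M_i)_{i∈I} a family of nonempty L-structures. Then the ultraproduct ∏_U M_i is ℵ₁-saturated: for every countable subset A of ∏_U M_i, every set Σ(x) of formulas in one free variable of the language L(A) (L expanded by constants for the elements of A) such that every finite subset of Σ(x) is realized by some element of ∏_U M_i, is itself realized by some element of ∏_U M_i. -/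
open FirstOrder Filter Cardinal

universe u

/-- If `L` is a countable language, `I` a nonempty set, `U` a countably
incomplete ultrafilter on `I`, and `(M i)` a family of nonempty `L`-structures, then
the ultraproduct `∏_U M i` is `ℵ₁`-saturated: for every countable `A ⊆ ∏_U M i`,
every finitely realized set of `L(A)`-formulas in one free variable is realized. -/
theorem stmt_17 (L : FirstOrder.Language.{u, u}) (hL : L.card ≤ Cardinal.aleph0)
    (I : Type u) [Nonempty I] (U : Ultrafilter I)
    (hinc : ∃ K : ℕ → Set I, (∀ n : ℕ, K n ∈ U) ∧ ⋂ n : ℕ, K n = ∅)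
    (M : I → Type u) [∀ i, L.Structure (M i)] [∀ i, Nonempty (M i)] :
    ∀ A : Set ((U : Filter I).Product M), A.Countable →
      ∀ Sigma : Set ((L[[A]]).Formula Unit),
        (∀ T : Finset ((L[[A]]).Formula Unit), (T : Set ((L[[A]]).Formula Unit)) ⊆ Sigma →
          ∃ b : (U : Filter I).Product M, ∀ φ ∈ T, φ.Realize (fun _ : Unit => b)) →
        ∃ b : (U : Filter I).Product M, ∀ φ ∈ Sigma, φ.Realize (fun _ : Unit => b) := by
  classical
  intro A hA Sigma hfin
  obtain ⟨K, hKU, hKempty⟩ := hinc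
  -- trivial case: Sigma empty
  rcases Set.eq_empty_or_nonempty Sigma with hS | hS
  · obtain ⟨b, -⟩ := hfin ∅ (by simp)
    exact ⟨b, by simp [hS]⟩
  -- Sigma is countable
  haveI hcA : Countable A := hA.to_subtype
  haveI hcF : Countable ((L[[A]]).Formula Unit) := by
    have hc : (L[[A]]).card ≤ ℵ₀ := by
      rw [Language.card_withConstants]
      calc Cardinal.lift.{u} L.card + Cardinal.lift.{u} #A ≤ ℵ₀ + ℵ₀ :=
            add_le_add (lift_le_aleph0.2 hL) (lift_le_aleph0.2 mk_le_aleph0)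
        _ = ℵ₀ := aleph0_add_aleph0
    have h1 : #(Σ n, (L[[A]]).BoundedFormula Unit n) ≤ ℵ₀ := by
      refine Language.BoundedFormula.card_le.trans (max_le le_rfl ?_)
      calc Cardinal.lift.{u} #Unit + Cardinal.lift.{0} (L[[A]]).card ≤ ℵ₀ + ℵ₀ :=
            add_le_add (lift_le_aleph0.2 mk_le_aleph0) (lift_le_aleph0.2 hc)
        _ = ℵ₀ := aleph0_add_aleph0
    haveI h2 : Countable (Σ n, (L[[A]]).BoundedFormula Unit n) := mk_le_aleph0_iff.1 h1
    exact Function.Injective.countable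
      (f := (_root_.Sigma.mk 0 : (L[[A]]).BoundedFormula Unit 0 →
        Σ n, (L[[A]]).BoundedFormula Unit n)) sigma_mk_injective
  obtain ⟨e, hrange⟩ := (Set.to_countable Sigma).exists_eq_range hS
  -- representatives
  have hrep : ∀ q : (U : Filter I).Product M, ∃ f : ∀ i, M i,
      ((↑f : (U : Filter I).Product M)) = q :=
    fun q => Quotient.inductionOn' q fun f => ⟨f, rfl⟩
  choose g hg using fun a : A => hrep a
  -- translate formulas to L-formulas with extra variables
  set ψ : ℕ → L.Formula (A ⊕ Unit) :=
    fun k => Language.BoundedFormula.constantsVarsEquiv (e k) with hψ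
  have key : ∀ (k : ℕ) (q : (U : Filter I).Product M),
      (e k).Realize (fun _ : Unit => q) ↔
        (ψ k).Realize (Sum.elim (fun a : A => (a : (U : Filter I).Product M))
          (fun _ : Unit => q)) := by
    intro k q
    exact (Language.BoundedFormula.realize_constantsVarsEquiv
      (φ := e k) (v := fun _ : Unit => q) (xs := default)).symm
  -- Łoś-type transfer
  have los : ∀ (k : ℕ) (c : ∀ i, M i),
      (ψ k).Realize (Sum.elim (fun a : A => (a : (U : Filter I).Product M))
        (fun _ : Unit => ((↑c : (U : Filter I).Product M)))) ↔
        ∀ᶠ i in (U : Filter I),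
          (ψ k).Realize (Sum.elim (fun a : A => g a i) (fun _ : Unit => c i)) := by
    intro k c
    have hx : (Sum.elim (fun a : A => (a : (U : Filter I).Product M))
        (fun _ : Unit => ((↑c : (U : Filter I).Product M)))) =
        fun v : A ⊕ Unit =>
          (↑(Sum.elim g (fun _ : Unit => c) v) : (U : Filter I).Product M) := by
      funext v
      cases v with
      | inl a => exact (hg a).symm
      | inr u => rfl
    rw [hx]
    refine (Language.Ultraproduct.realize_formula_cast (ψ k) _).trans ?_
    refine eventually_congr (Eventually.of_forall fun i => ?_)
    have hx2 : (fun v : A ⊕ Unit => Sum.elim g (fun _ : Unit => c) v i) =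
        Sum.elim (fun a : A => g a i) (fun _ : Unit => c i) := by
      funext v; cases v <;> rfl
    rw [hx2]
  -- step 1: witnesses for finite fragments
  have step1 : ∀ n : ℕ, ∃ c : ∀ i, M i, ∀ᶠ i in (U : Filter I), ∀ k < n,
      (ψ k).Realize (Sum.elim (fun a : A => g a i) (fun _ : Unit => c i)) := by
    intro n
    obtain ⟨q, hq⟩ := hfin ((Finset.range n).image e) (by
      intro φ hφ
      simp only [Finset.coe_image, Set.mem_image, Finset.mem_coe, Finset.mem_range] at hφ
      obtain ⟨k, -, rfl⟩ := hφ
      rw [hrange]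
      exact Set.mem_range_self k)
    obtain ⟨c, rfl⟩ := hrep q
    refine ⟨c, (eventually_all_finite (Set.finite_Iio n)).2 fun k hk => ?_⟩
    exact ((key k _).trans (los k c)).1
      (hq (e k) (Finset.mem_image_of_mem e (Finset.mem_range.2 hk)))
  choose b hb using step1
  -- step 2: the decreasing chain of sets
  set Y : ℕ → Set I := fun n => {i | (∀ m < n, i ∈ K m) ∧ ∀ m ≤ n, ∀ k < m,
    (ψ k).Realize (Sum.elim (fun a : A => g a i) (fun _ : Unit => b m i))} with hY
  have hYU : ∀ n, Y n ∈ (U : Filter I) := by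
    intro n
    have h1 : ∀ᶠ i in (U : Filter I), ∀ m < n, i ∈ K m :=
      (eventually_all_finite (Set.finite_Iio n)).2 fun m _ => hKU m
    have h2 : ∀ᶠ i in (U : Filter I), ∀ m ≤ n, ∀ k < m,
        (ψ k).Realize (Sum.elim (fun a : A => g a i) (fun _ : Unit => b m i)) :=
      (eventually_all_finite (Set.finite_Iic n)).2 fun m _ => hb m
    exact h1.and h2
  have hYanti : ∀ {m n : ℕ}, m ≤ n → Y n ⊆ Y m := by
    intro m n hmn i hi
    exact ⟨fun m' hm' => hi.1 m' (lt_of_lt_of_le hm' hmn),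
      fun m' hm' => hi.2 m' (le_trans hm' hmn)⟩
  have hY0 : ∀ i, i ∈ Y 0 := fun i =>
    ⟨fun m hm => absurd hm (Nat.not_lt_zero m),
     fun m hm k hk => absurd (lt_of_lt_of_le hk hm) (Nat.not_lt_zero k)⟩
  have hexists : ∀ i, ∃ n, i ∉ Y n := by
    intro i
    have h : i ∉ ⋂ n, K n := by rw [hKempty]; exact Set.notMem_empty i
    rw [Set.mem_iInter] at h
    push_neg at h
    obtain ⟨m, hm⟩ := h
    exact ⟨m + 1, fun hi => hm (hi.1 m (Nat.lt_succ_self m))⟩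
  -- step 3: build the realizing element
  set f : ∀ i, M i := fun i => b (Nat.find (hexists i) - 1) i with hf
  have claim : ∀ k : ℕ, ∀ i ∈ Y (k + 1),
      (ψ k).Realize (Sum.elim (fun a : A => g a i) (fun _ : Unit => f i)) := by
    intro k i hi
    have hd1 : 1 ≤ Nat.find (hexists i) := by
      rcases Nat.eq_zero_or_pos (Nat.find (hexists i)) with h | h
      · exact absurd (h ▸ Nat.find_spec (hexists i)) (fun hc => hc (hY0 i))
      · exact h
    have hdk : k + 2 ≤ Nat.find (hexists i) := by
      by_contra hcon
      push_neg at hcon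
      exact Nat.find_spec (hexists i) (hYanti (Nat.lt_succ_iff.1 hcon) hi)
    have hin : i ∈ Y (Nat.find (hexists i) - 1) := by
      by_contra hcon
      exact Nat.find_min (hexists i) (by omega) hcon
    exact hin.2 (Nat.find (hexists i) - 1) le_rfl k (by omega)
  refine ⟨((↑f : (U : Filter I).Product M)), ?_⟩
  intro φ hφ
  rw [hrange] at hφ
  obtain ⟨k, rfl⟩ := hφ
  exact ((key k _).trans (los k f)).2
    (Filter.mem_of_superset (hYU (k + 1)) (fun i hi => claim k i hi))
end
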